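/- arXiv:2506.10935 — 8 statements merged into one kernel-verified Lean document; each statement's English description precedes it below -/
import Mathlib

section
/- Let 0 < a < b, let n ≥ 1 be an integer, and let f : [a,b] → ℝ be continuous. A polynomial p ∈ L_n minimizes ‖f − q‖_{C[a,b]} over q ∈ L_n if and only if there exist points a ≤ x₀ < x₁ < ⋯ < x_n ≤ b such that |p(x_j) − f(x_j)| = ‖p − f‖_{C[a,b]} for all j = 0,…,n and p(x_j) − f(x_j) = −(p(x_{j−1}) − f(x_{j−1})) for all j = 1,…,n (Chebyshev alternance characterization for odd polynomial approximation). -/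
/-!
On `(0, ∞)` every element of `L_n` is `y ↦ y * Q (y²)` with `deg Q < n`, so a nonzero one has
fewer than `n` positive zeros: `L_n` is a Haar space on `[a, b]`, and Chebyshev's argument applies.
If the error `p - f` alternates at `n + 1` points and `q` were better, then `p - q` would have the
sign of `p - f` at these points, hence `n` positive zeros. Conversely, choose the extremal points
of the error greedily from the left; if fewer than `n + 1` are found, the extremal points change
sign only across `m < n` zeros `z_i` of the error, so `y ↦ σ y ∏ (z_i² - y²) ∈ L_n` has the sign
of the error wherever `|p - f|` is maximal, and subtracting a small multiple of it from `p`
lowers the error.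
-/

/-- `oddPoly n α` is the odd polynomial `α 0 * x + α 1 * x^3 + ⋯ + α (n-1) * x^(2n-1)`.
The functions of this form are exactly the elements of the space `L_n` of odd
polynomials of degree at most `2n-1`. -/
noncomputable def oddPoly (n : ℕ) (α : ℕ → ℝ) : ℝ → ℝ :=
  fun x => ∑ i ∈ Finset.range n, α i * x ^ (2 * i + 1)

/-- The uniform (Chebyshev) distance `‖f − g‖_{C[a,b]} = sup_{x ∈ [a,b]} |f x − g x|`. -/
noncomputable def unifErr (a b : ℝ) (f g : ℝ → ℝ) : ℝ :=
  sSup ((fun x => |f x - g x|) '' Set.Icc a b)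

open Set Polynomial

section OddPoly

variable {n : ℕ}

theorem continuous_oddPoly (α : ℕ → ℝ) : Continuous (oddPoly n α) :=
  continuous_finsetSum _ fun _ _ => by fun_prop

theorem oddPoly_sub (α β : ℕ → ℝ) (y : ℝ) :
    oddPoly n (α - β) y = oddPoly n α y - oddPoly n β y := by
  simp only [oddPoly, Pi.sub_apply, sub_mul, Finset.sum_sub_distrib]

theorem oddPoly_smul (c : ℝ) (α : ℕ → ℝ) (y : ℝ) :
    oddPoly n (c • α) y = c * oddPoly n α y := by
  simp only [oddPoly, Pi.smul_apply, smul_eq_mul, Finset.mul_sum, mul_assoc]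

theorem exists_degree_lt_oddPoly_eq (α : ℕ → ℝ) :
    ∃ Q : ℝ[X], Q.degree < n ∧ ∀ y, oddPoly n α y = y * Q.eval (y ^ 2) := by
  refine ⟨∑ i : Fin n, C (α i) * X ^ (i : ℕ), degree_sum_fin_lt _, fun y => ?_⟩
  simp only [oddPoly, eval_finsetSum, eval_mul, eval_C, eval_pow, eval_X, Finset.mul_sum,
    Fin.sum_univ_eq_sum_range (fun i => y * (α i * (y ^ 2) ^ i))]
  exact Finset.sum_congr rfl fun i _ => by ring

theorem exists_oddPoly_eq_of_natDegree_lt {Q : ℝ[X]} (hQ : Q.natDegree < n) :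
    ∃ α : ℕ → ℝ, ∀ y, oddPoly n α y = y * Q.eval (y ^ 2) := by
  refine ⟨Q.coeff, fun y => ?_⟩
  rw [eval_eq_sum_range' hQ, oddPoly, Finset.mul_sum]
  exact Finset.sum_congr rfl fun i _ => by ring

theorem oddPoly_eq_zero_of_roots {α : ℕ → ℝ} {S : Finset ℝ} (hS : n ≤ S.card)
    (hpos : ∀ z ∈ S, 0 < z) (hroot : ∀ z ∈ S, oddPoly n α z = 0) (y : ℝ) :
    oddPoly n α y = 0 := by
  obtain ⟨Q, hQ, hαQ⟩ := exists_degree_lt_oddPoly_eq (n := n) α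
  have hsq : InjOn (· ^ 2 : ℝ → ℝ) S := fun u hu v hv huv =>
    (pow_left_inj₀ (hpos u hu).le (hpos v hv).le two_ne_zero).1 huv
  have hQ0 : Q = 0 := by
    refine eq_zero_of_degree_lt_of_eval_finset_eq_zero (S.image (· ^ 2)) ?_ ?_
    · rw [Finset.card_image_of_injOn hsq]
      exact hQ.trans_le (by exact_mod_cast hS)
    · simp only [Finset.mem_image, forall_exists_index, and_imp]
      rintro _ z hz rfl
      have := hroot z hz
      rw [hαQ] at this
      exact (mul_eq_zero.1 this).resolve_left (hpos z hz).ne'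
  rw [hαQ, hQ0, eval_zero, mul_zero]

theorem exists_oddPoly_eq_mul_prod {Z : Finset ℝ} (hZ : Z.card < n) (σ : ℝ) :
    ∃ γ : ℕ → ℝ, ∀ y, oddPoly n γ y = σ * y * ∏ z ∈ Z, (z ^ 2 - y ^ 2) := by
  have hlin (z : ℝ) : (C (z ^ 2) - X : ℝ[X]).natDegree ≤ 1 :=
    (natDegree_sub_le _ _).trans (by simp)
  have hdeg : (C σ * ∏ z ∈ Z, (C (z ^ 2) - X)).natDegree < n := by
    refine (natDegree_C_mul_le _ _).trans_lt (lt_of_le_of_lt ?_ hZ)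
    calc _ ≤ ∑ z ∈ Z, (C (z ^ 2) - X : ℝ[X]).natDegree := natDegree_prod_le _ _
      _ ≤ ∑ _z ∈ Z, 1 := Finset.sum_le_sum fun z _ => hlin z
      _ = Z.card := by simp
  obtain ⟨γ, hγ⟩ := exists_oddPoly_eq_of_natDegree_lt hdeg
  refine ⟨γ, fun y => ?_⟩
  simp only [hγ, eval_mul, eval_C, eval_prod, eval_sub, eval_X]
  ring

end OddPoly

section UnifErr

variable {a b : ℝ} {f g : ℝ → ℝ}

theorem isGreatest_unifErr (hab : a ≤ b) (hf : ContinuousOn f (Icc a b))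
    (hg : ContinuousOn g (Icc a b)) :
    IsGreatest ((fun x => |f x - g x|) '' Icc a b) (unifErr a b f g) := by
  have hK : IsCompact ((fun x => |f x - g x|) '' Icc a b) :=
    isCompact_Icc.image_of_continuousOn (hf.sub hg).abs
  exact hK.isGreatest_sSup ((nonempty_Icc.2 hab).image _)

theorem abs_sub_le_unifErr (hf : ContinuousOn f (Icc a b)) (hg : ContinuousOn g (Icc a b))
    {x : ℝ} (hx : x ∈ Icc a b) : |f x - g x| ≤ unifErr a b f g :=
  (isGreatest_unifErr (hx.1.trans hx.2) hf hg).2 (mem_image_of_mem _ hx)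

theorem unifErr_lt_of_forall_lt (hab : a ≤ b) (hf : ContinuousOn f (Icc a b))
    (hg : ContinuousOn g (Icc a b)) {E : ℝ} (h : ∀ x ∈ Icc a b, |f x - g x| < E) :
    unifErr a b f g < E := by
  obtain ⟨x, hx, hxE⟩ := (isGreatest_unifErr hab hf hg).1
  exact hxE ▸ h x hx

end UnifErr

theorem exists_mem_Ioo_eq_zero {g : ℝ → ℝ} {u v : ℝ} (huv : u ≤ v)
    (hg : ContinuousOn g (Icc u v)) (hsign : g u * g v < 0) : ∃ z ∈ Ioo u v, g z = 0 := by
  have h0 : (0 : ℝ) ∈ uIcc (g u) (g v) := by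
    rcases mul_neg_iff.1 hsign with h | h
    · exact mem_uIcc.2 (Or.inr ⟨h.2.le, h.1.le⟩)
    · exact mem_uIcc.2 (Or.inl ⟨h.1.le, h.2.le⟩)
  obtain ⟨z, hz, hgz⟩ := intermediate_value_uIcc (by rwa [uIcc_of_le huv]) h0
  rw [uIcc_of_le huv] at hz
  refine ⟨z, ⟨hz.1.lt_of_ne ?_, hz.2.lt_of_ne ?_⟩, hgz⟩ <;> rintro rfl <;> simp [hgz] at hsign

theorem exists_finset_zeros_of_alternating {g : ℝ → ℝ} (hg : Continuous g) {k : ℕ}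
    {x : Fin (k + 1) → ℝ} (hx : StrictMono x)
    (halt : ∀ j : Fin k, g (x j.castSucc) * g (x j.succ) < 0) :
    ∃ Z : Finset ℝ, Z.card = k ∧ ∀ z ∈ Z, x 0 < z ∧ g z = 0 := by
  choose y hy hgy using fun j : Fin k =>
    exists_mem_Ioo_eq_zero (hx j.castSucc_lt_succ).le hg.continuousOn (halt j)
  have hy_mono : StrictMono y := fun i j hij =>
    calc y i < x i.succ := (hy i).2
      _ ≤ x j.castSucc := hx.monotone (Fin.succ_le_castSucc_iff.2 hij)
      _ < y j := (hy j).1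
  refine ⟨Finset.univ.image y, by simp [Finset.card_image_of_injective _ hy_mono.injective], ?_⟩
  simp only [Finset.mem_image, Finset.mem_univ, true_and, forall_exists_index]
  rintro _ j rfl
  exact ⟨(hx.monotone (Fin.zero_le _)).trans_lt (hy j).1, hgy j⟩

theorem abs_sub_lt_of_mul_pos {u v E : ℝ} (huv : 0 < u * v) (hu : |u| ≤ E) (hv : |v| < E) :
    |u - v| < E := by
  rw [abs_le] at hu
  rw [abs_lt] at hv ⊢
  rcases mul_pos_iff.1 huv with h | h <;> constructor <;> linarith

theorem IsCompact.exists_pos_forall_abs_sub_mul_lt {X : Type*} [TopologicalSpace X]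
    {K : Set X} (hK : IsCompact K) {e r : X → ℝ} {E : ℝ} (he : ContinuousOn e K)
    (hr : ContinuousOn r K) (hE : 0 < E) (hle : ∀ y ∈ K, |e y| ≤ E)
    (hsign : ∀ y ∈ K, |e y| = E → 0 < e y * r y) :
    ∃ ε > 0, ∀ y ∈ K, |e y - ε * r y| < E := by
  obtain ⟨C, hC⟩ := hK.exists_bound_of_continuousOn hr
  obtain ⟨δ, hδ, hδle⟩ := hK.exists_forall_le' (f := fun y => max (E - |e y|) (e y * r y))
    ((continuousOn_const.sub he.abs).sup (he.mul hr)) fun y hy =>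
      (hle y hy).lt_or_eq.elim (fun h => lt_max_of_lt_left (by linarith))
        fun h => lt_max_of_lt_right (hsign y hy h)
  set ε := min δ E / (|C| + 1)
  have hε : 0 < ε := by positivity
  have hεr : ∀ y ∈ K, |ε * r y| < min δ E := fun y hy =>
    calc |ε * r y| = ε * |r y| := by rw [abs_mul, abs_of_pos hε]
      _ ≤ ε * |C| :=
        mul_le_mul_of_nonneg_left ((Real.norm_eq_abs _ ▸ hC y hy).trans (le_abs_self C)) hε.le
      _ < min δ E := by
        rw [div_mul_eq_mul_div, div_lt_iff₀ (by positivity)]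
        nlinarith [lt_min hδ hE]
  refine ⟨ε, hε, fun y hy => ?_⟩
  rcases le_or_gt (e y * r y) 0 with hneg | hpos
  · have hgap : δ ≤ E - |e y| := by
      rcases le_max_iff.1 (hδle y hy) with h | h
      · exact h
      · linarith
    calc |e y - ε * r y| ≤ |e y| + |ε * r y| := abs_sub _ _
      _ < |e y| + δ := by linarith [hεr y hy, min_le_left δ E]
      _ ≤ E := by linarith
  · exact abs_sub_lt_of_mul_pos (by rw [mul_left_comm]; positivity) (hle y hy)
      ((hεr y hy).trans_le (min_le_right δ E))

theorem ContinuousOn.isCompact_Icc_inter_preimage {e : ℝ → ℝ} {c d : ℝ}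
    (he : ContinuousOn e (Icc c d)) (v : ℝ) : IsCompact (Icc c d ∩ e ⁻¹' {v}) :=
  isCompact_Icc.of_isClosed_subset
    (he.preimage_isClosed_of_isClosed isClosed_Icc isClosed_singleton) inter_subset_left

def IsAlternance (e : ℝ → ℝ) (E : ℝ) {k : ℕ} (x : Fin (k + 1) → ℝ) : Prop :=
  StrictMono x ∧ (∀ j, |e (x j)| = E) ∧ ∀ j : Fin k, e (x j.succ) = -e (x j.castSucc)

section Alternance

variable {e : ℝ → ℝ} {E b : ℝ}

theorem IsAlternance.cons {k : ℕ} {x : Fin (k + 1) → ℝ} (hx : IsAlternance e E x) {c : ℝ}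
    (hc : |e c| = E) (hcx : c < x 0) (hsign : e (x 0) = -e c) :
    IsAlternance e E (Fin.cons c x : Fin (k + 2) → ℝ) := by
  obtain ⟨hmono, habs, halt⟩ := hx
  refine ⟨Fin.strictMono_cons.2 ⟨fun j => hcx.trans_le (hmono.monotone (Fin.zero_le j)), hmono⟩,
    Fin.cases hc habs, Fin.cases (by simpa using hsign) fun j => ?_⟩
  simpa [← Fin.succ_castSucc] using halt j

theorem pos_mul_prod_insert {Z : Finset ℝ} {c b y₁ z₀ σ s : ℝ} (hZ : ∀ z ∈ Z, y₁ < z)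
    (hz₀Z : z₀ ∉ Z) (hz₀ : z₀ < y₁)
    (hσ : ∀ y ∈ Icc y₁ b, |e y| = E → 0 < σ * e y * ∏ z ∈ Z, (z - y))
    (hy₁b : y₁ ≤ b) (hy₁E : |e y₁| = E) (hey₁ : e y₁ = -s)
    (hbefore : ∀ y ∈ Icc c b, y < y₁ → |e y| = E → e y = s ∧ y < z₀) :
    ∀ y ∈ Icc c b, |e y| = E → 0 < -σ * e y * ∏ z ∈ insert z₀ Z, (z - y) := by
  have hZpos {y : ℝ} (hy : y ≤ y₁) : 0 < ∏ z ∈ Z, (z - y) :=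
    Finset.prod_pos fun z hz => sub_pos.2 (hy.trans_lt (hZ z hz))
  have hσs : σ * s < 0 := by
    have := hσ y₁ (left_mem_Icc.2 hy₁b) hy₁E
    rw [hey₁, mul_neg] at this
    linarith [(mul_pos_iff_of_pos_right (hZpos le_rfl)).1 this]
  intro y hy hyE
  rw [Finset.prod_insert hz₀Z]
  rcases le_or_gt y₁ y with hy₁y | hyy₁
  · have := mul_pos (hσ y ⟨hy₁y, hy.2⟩ hyE) (sub_pos.2 (hz₀.trans_le hy₁y))
    linarith
  · obtain ⟨hey, hyz₀⟩ := hbefore y hy hyy₁ hyE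
    have := mul_pos (mul_pos (neg_pos.2 hσs) (sub_pos.2 hyz₀)) (hZpos hyy₁.le)
    rw [hey]
    linarith

/-- The second alternative says that the points of `[c, b]` where `|e| = E` change sign
only across the fewer than `k` nodes of `Z`. -/
theorem isAlternance_or_sign_pattern (hE : 0 < E) (k : ℕ) {c : ℝ} (hcb : c ≤ b)
    (he : ContinuousOn e (Icc c b)) (hc : |e c| = E) :
    (∃ x : Fin (k + 1) → ℝ, x 0 = c ∧ (∀ j, x j ≤ b) ∧ IsAlternance e E x) ∨
    ∃ Z : Finset ℝ, Z.card < k ∧ (∀ z ∈ Z, c < z) ∧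
      ∃ σ : ℝ, ∀ y ∈ Icc c b, |e y| = E → 0 < σ * e y * ∏ z ∈ Z, (z - y) := by
  induction k generalizing c with
  | zero =>
    exact Or.inl ⟨fun _ => c, rfl, fun _ => hcb,
      Fin.strictMono_iff_lt_succ.2 Fin.elim0, fun _ => hc, Fin.elim0⟩
  | succ k ih =>
    have hext (y : ℝ) (hy : |e y| = E) : e y = e c ∨ e y = -e c := abs_eq_abs.1 (hy.trans hc.symm)
    have hc0 : e c ≠ 0 := fun h => by rw [h, abs_zero] at hc; linarith
    by_cases hB : ∃ y ∈ Icc c b, e y = -e c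
    swap
    · push Not at hB
      refine Or.inr ⟨∅, k.succ_pos, by simp, e c, fun y hy hyE => ?_⟩
      rw [(hext y hyE).resolve_right (hB y hy), Finset.prod_empty, mul_one]
      exact mul_self_pos.2 hc0
    obtain ⟨y₁, ⟨hy₁, hey₁⟩, hy₁least⟩ := (he.isCompact_Icc_inter_preimage _).exists_isLeast hB
    have hey₁ : e y₁ = -e c := hey₁
    have hcy₁ : c < y₁ := hy₁.1.lt_of_ne (by rintro rfl; exact hc0 (by linarith))
    have hy₁E : |e y₁| = E := by rw [hey₁, abs_neg, hc]
    rcases ih hy₁.2 (he.mono (Icc_subset_Icc_left hcy₁.le)) hy₁E with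
      ⟨x, hx0, hxb, hx⟩ | ⟨Z, hZcard, hZ, σ, hσ⟩
    · refine Or.inl ⟨Fin.cons c x, rfl, Fin.cases hcb hxb, hx.cons hc (hx0 ▸ hcy₁) ?_⟩
      rw [hx0, hey₁]
    -- the new node `z₀` lies between the last point `w < y₁` with `e w = e c` and `y₁`
    obtain ⟨w, ⟨hw, hew⟩, hwgreatest⟩ :=
      ((he.mono (Icc_subset_Icc_right hy₁.2)).isCompact_Icc_inter_preimage (e c)).exists_isGreatest
        ⟨c, left_mem_Icc.2 hcy₁.le, rfl⟩
    have hew : e w = e c := hew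
    obtain ⟨z₀, hz₀, -⟩ := exists_mem_Ioo_eq_zero hw.2 (he.mono (Icc_subset_Icc hw.1 hy₁.2))
      (by rw [hew, hey₁, mul_neg]; exact neg_neg_of_pos (mul_self_pos.2 hc0))
    have hz₀Z : z₀ ∉ Z := fun h => (hZ z₀ h).not_gt hz₀.2
    refine Or.inr ⟨insert z₀ Z, (Finset.card_insert_le _ _).trans_lt (by omega), ?_, -σ,
      pos_mul_prod_insert hZ hz₀Z hz₀.2 hσ hy₁.2 hy₁E hey₁ fun y hy hyy₁ hyE => ?_⟩
    · simp only [Finset.mem_insert, forall_eq_or_imp]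
      exact ⟨hw.1.trans_lt hz₀.1, fun z hz => hcy₁.trans (hZ z hz)⟩
    have hey : e y = e c := (hext y hyE).resolve_right fun h =>
      (hy₁least ⟨hy, h⟩).not_gt hyy₁
    exact ⟨hey, (hwgreatest ⟨⟨hy.1, hyy₁.le⟩, hey⟩).trans_lt hz₀.1⟩

end Alternance

theorem mul_add_pos_of_abs_lt {u v : ℝ} (h : |v| < |u|) : 0 < u * (u + v) := by
  have huv : -(|u| * |v|) ≤ u * v := abs_mul u v ▸ neg_abs_le _
  nlinarith [abs_mul_abs_self u, mul_pos ((abs_nonneg v).trans_lt h) (sub_pos.2 h)]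

theorem exists_strictMono_fin_Icc {a b : ℝ} (hab : a < b) (k : ℕ) :
    ∃ x : Fin k → ℝ, StrictMono x ∧ ∀ j, x j ∈ Icc a b := by
  refine ⟨fun j => b - (b - a) / ((j : ℕ) + 1), fun i j hij => ?_, fun j => ⟨?_, ?_⟩⟩
  · have : ((i : ℕ) : ℝ) < (j : ℕ) := by exact_mod_cast hij
    have := div_lt_div_of_pos_left (sub_pos.2 hab) (by positivity)
      (by linarith : (i : ℝ) + 1 < j + 1)
    linarith
  · linarith [div_le_self (sub_pos.2 hab).le (by simp : (1 : ℝ) ≤ (j : ℕ) + 1)]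
  · linarith [div_pos (sub_pos.2 hab) (by positivity : (0 : ℝ) < (j : ℕ) + 1)]

section BestApproximation

variable {n : ℕ} {a b : ℝ} {f : ℝ → ℝ} {α : ℕ → ℝ}

theorem unifErr_le_of_isAlternance (ha : 0 < a) (hf : ContinuousOn f (Icc a b))
    {x : Fin (n + 1) → ℝ} (hmem : ∀ j, x j ∈ Icc a b)
    (hx : IsAlternance (fun y => oddPoly n α y - f y) (unifErr a b f (oddPoly n α)) x)
    (β : ℕ → ℝ) : unifErr a b f (oddPoly n α) ≤ unifErr a b f (oddPoly n β) := by
  obtain ⟨hmono, habs, halt⟩ := hx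
  beta_reduce at habs halt
  by_contra! hlt
  have hpos (j : Fin (n + 1)) :
      0 < (oddPoly n α (x j) - f (x j)) * oddPoly n (α - β) (x j) := by
    have hq := abs_sub_le_unifErr hf (continuous_oddPoly (n := n) β).continuousOn (hmem j)
    have := mul_add_pos_of_abs_lt (u := oddPoly n α (x j) - f (x j))
      (v := f (x j) - oddPoly n β (x j)) (by rw [habs j]; linarith)
    rw [oddPoly_sub]
    rwa [sub_add_sub_cancel] at this
  have hsign (j : Fin n) :
      oddPoly n (α - β) (x j.castSucc) * oddPoly n (α - β) (x j.succ) < 0 := by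
    have h₀ := hpos j.castSucc
    have h₁ := hpos j.succ
    rw [halt j] at h₁
    nlinarith [mul_pos h₀ h₁, sq_nonneg (oddPoly n α (x j.castSucc) - f (x j.castSucc))]
  obtain ⟨Z, hZcard, hZ⟩ := exists_finset_zeros_of_alternating (continuous_oddPoly _) hmono hsign
  have hzero := oddPoly_eq_zero_of_roots hZcard.ge
    (fun z hz => (ha.trans_le (hmem 0).1).trans (hZ z hz).1) (fun z hz => (hZ z hz).2) (x 0)
  simpa [hzero] using hpos 0

theorem exists_isAlternance_of_forall_unifErr_le (ha : 0 < a) (hab : a < b)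
    (hf : ContinuousOn f (Icc a b))
    (hbest : ∀ β : ℕ → ℝ, unifErr a b f (oddPoly n α) ≤ unifErr a b f (oddPoly n β)) :
    ∃ x : Fin (n + 1) → ℝ, (∀ j, x j ∈ Icc a b) ∧
      IsAlternance (fun y => oddPoly n α y - f y) (unifErr a b f (oddPoly n α)) x := by
  set e := fun y => oddPoly n α y - f y
  set E := unifErr a b f (oddPoly n α)
  have hp : ContinuousOn (oddPoly n α) (Icc a b) := (continuous_oddPoly α).continuousOn
  have he : ContinuousOn e (Icc a b) := hp.sub hf
  have hle (y : ℝ) (hy : y ∈ Icc a b) : |e y| ≤ E :=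
    abs_sub_comm (f y) _ ▸ abs_sub_le_unifErr hf hp hy
  obtain ⟨y₀, hy₀, hy₀E⟩ := (isGreatest_unifErr hab.le hf hp).1
  rcases ((abs_nonneg _).trans_eq hy₀E).eq_or_lt with hE0 | hE
  · obtain ⟨x, hmono, hmem⟩ := exists_strictMono_fin_Icc hab (n + 1)
    have hE0 : E = 0 := hE0.symm
    have hx0 (j : Fin (n + 1)) : e (x j) = 0 :=
      abs_nonpos_iff.1 ((hle _ (hmem j)).trans_eq hE0)
    exact ⟨x, hmem, hmono, fun j => by rw [hx0, abs_zero, hE0], fun j => by rw [hx0, hx0, neg_zero]⟩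
  obtain ⟨c, ⟨hc, hcE⟩, hcleast⟩ := (he.abs.isCompact_Icc_inter_preimage E).exists_isLeast
    ⟨y₀, hy₀, show |oddPoly n α y₀ - f y₀| = E by rw [abs_sub_comm]; exact hy₀E⟩
  rcases isAlternance_or_sign_pattern hE n hc.2 (he.mono (Icc_subset_Icc_left hc.1)) hcE with
    ⟨x, hx0, hxb, hx⟩ | ⟨Z, hZcard, hZ, σ, hσ⟩
  · exact ⟨x, fun j => ⟨hc.1.trans (hx0 ▸ hx.1.monotone (Fin.zero_le j)), hxb j⟩, hx⟩
  -- otherwise a small multiple of `σ y ∏ (z² - y²) ∈ L_n` improves on `p`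
  obtain ⟨γ, hγ⟩ := exists_oddPoly_eq_mul_prod hZcard σ
  have hsign (y : ℝ) (hy : y ∈ Icc a b) (hyE : |e y| = E) : 0 < e y * oddPoly n γ y := by
    have hcy : c ≤ y := hcleast ⟨hy, hyE⟩
    have hZy : 0 < ∏ z ∈ Z, (z + y) :=
      Finset.prod_pos fun z hz => by linarith [hZ z hz, hc.1, ha.trans_le hy.1]
    have hfactor : e y * oddPoly n γ y =
        (y * ∏ z ∈ Z, (z + y)) * (σ * e y * ∏ z ∈ Z, (z - y)) := by
      rw [hγ, Finset.prod_congr rfl fun z _ => sq_sub_sq z y, Finset.prod_mul_distrib]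
      ring
    rw [hfactor]
    exact mul_pos (mul_pos (ha.trans_le hy.1) hZy) (hσ y ⟨hcy, hy.2⟩ hyE)
  obtain ⟨ε, -, hlt⟩ := isCompact_Icc.exists_pos_forall_abs_sub_mul_lt he
    (continuous_oddPoly γ).continuousOn hE hle hsign
  have hbetter : unifErr a b f (oddPoly n (α - ε • γ)) < E :=
    unifErr_lt_of_forall_lt hab.le hf (continuous_oddPoly _).continuousOn fun y hy => by
      rw [abs_sub_comm, oddPoly_sub, oddPoly_smul, sub_right_comm]
      exact hlt y hy
  exact ((hbest _).not_gt hbetter).elim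

end BestApproximation

theorem best_odd_approx_iff_alternance_general (n : ℕ) (a b : ℝ) (ha : 0 < a)
    (hab : a < b) (f : ℝ → ℝ) (hf : ContinuousOn f (Set.Icc a b)) (α : ℕ → ℝ) :
    (∀ β : ℕ → ℝ, unifErr a b f (oddPoly n α) ≤ unifErr a b f (oddPoly n β)) ↔
    ∃ x : Fin (n + 1) → ℝ, StrictMono x ∧ (∀ j, x j ∈ Set.Icc a b) ∧
      (∀ j, |oddPoly n α (x j) - f (x j)| = unifErr a b f (oddPoly n α)) ∧
      (∀ j : Fin n, oddPoly n α (x j.succ) - f (x j.succ)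
        = -(oddPoly n α (x j.castSucc) - f (x j.castSucc))) := by
  constructor
  · intro hbest
    obtain ⟨x, hmem, hmono, habs, halt⟩ := exists_isAlternance_of_forall_unifErr_le ha hab hf hbest
    exact ⟨x, hmono, hmem, habs, halt⟩
  · rintro ⟨x, hmono, hmem, habs, halt⟩
    exact unifErr_le_of_isAlternance ha hf hmem ⟨hmono, habs, halt⟩

/-- Chebyshev alternance characterization: `p ∈ L_n` is a best uniform
odd polynomial approximation of `f` on `[a,b]` iff there are `n+1` points
`x₀ < ⋯ < x_n` in `[a,b]` where `|p(x_j) − f(x_j)|` equals `‖p − f‖_{C[a,b]}` with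
alternating signs. -/
theorem best_odd_approx_iff_alternance (n : ℕ) (hn : 1 ≤ n) (a b : ℝ) (ha : 0 < a)
    (hab : a < b) (f : ℝ → ℝ) (hf : ContinuousOn f (Set.Icc a b)) (α : ℕ → ℝ) :
    (∀ β : ℕ → ℝ, unifErr a b f (oddPoly n α) ≤ unifErr a b f (oddPoly n β)) ↔
    ∃ x : Fin (n + 1) → ℝ, StrictMono x ∧ (∀ j, x j ∈ Set.Icc a b) ∧
      (∀ j, |oddPoly n α (x j) - f (x j)| = unifErr a b f (oddPoly n α)) ∧
      (∀ j : Fin n, oddPoly n α (x j.succ) - f (x j.succ)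
        = -(oddPoly n α (x j.castSucc) - f (x j.castSucc))) :=
  best_odd_approx_iff_alternance_general n a b ha hab f hf α
end

section
/- Let 0 < a < b. The best odd polynomial approximation of degree 3 of the constant function 1 on [a,b] is given explicitly by p_{2,a,b}(x) = (2 / (2((a² + ab + b²)/3)^{3/2} + a²b + b²a)) · ((a² + ab + b²)x − x³). Moreover, p_{2,a,b} attains its maximum on [a,b] at the point e = √((a² + ab + b²)/3), and the approximation error equals ε(2,a,b) = (2((a² + ab + b²)/3)^{3/2} − a²b − b²a) / (2((a² + ab + b²)/3)^{3/2} + a²b + b²a). -/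
set_option maxHeartbeats 1000000 in
/-- Explicit form of the best odd cubic approximation of `1` on `[a,b]`:
`p_{2,a,b}(x) = (2 / (2((a²+ab+b²)/3)^{3/2} + a²b + b²a)) ((a²+ab+b²)x − x³)`,
it attains its maximum on `[a,b]` at `e = √((a²+ab+b²)/3)`, and
`ε(2,a,b) = (2((a²+ab+b²)/3)^{3/2} − a²b − b²a) / (2((a²+ab+b²)/3)^{3/2} + a²b + b²a)`. -/
theorem best_cubic_explicit (a b : ℝ) (ha : 0 < a) (hab : a < b) (α : ℕ → ℝ)
    (hbest : ∀ β : ℕ → ℝ,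
      unifErr a b (fun _ => (1:ℝ)) (oddPoly 2 α) ≤ unifErr a b (fun _ => (1:ℝ)) (oddPoly 2 β)) :
    (∀ x : ℝ, oddPoly 2 α x
        = 2 / (2 * (((a ^ 2 + a * b + b ^ 2) / 3) ^ ((3:ℝ)/2)) + a ^ 2 * b + b ^ 2 * a)
          * ((a ^ 2 + a * b + b ^ 2) * x - x ^ 3)) ∧
    Real.sqrt ((a ^ 2 + a * b + b ^ 2) / 3) ∈ Set.Icc a b ∧
    IsMaxOn (oddPoly 2 α) (Set.Icc a b) (Real.sqrt ((a ^ 2 + a * b + b ^ 2) / 3)) ∧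
    unifErr a b (fun _ => (1:ℝ)) (oddPoly 2 α)
      = (2 * (((a ^ 2 + a * b + b ^ 2) / 3) ^ ((3:ℝ)/2)) - a ^ 2 * b - b ^ 2 * a)
        / (2 * (((a ^ 2 + a * b + b ^ 2) / 3) ^ ((3:ℝ)/2)) + a ^ 2 * b + b ^ 2 * a) := by
  have hb : 0 < b := ha.trans hab
  set s : ℝ := a ^ 2 + a * b + b ^ 2 with hs
  have hs3 : (0:ℝ) < s / 3 := by rw [hs]; nlinarith
  set e : ℝ := Real.sqrt (s / 3) with he_def
  clear_value s

  have he2 : e ^ 2 = s / 3 := Real.sq_sqrt hs3.le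
  have he0 : 0 < e := Real.sqrt_pos.mpr hs3
  have hs3e : s = 3 * e ^ 2 := by linarith
  have hE : (s / 3) ^ ((3:ℝ)/2) = e ^ 3 := by
    rw [show ((3:ℝ)/2) = (1/2) * ((3:ℕ):ℝ) by norm_num, Real.rpow_mul hs3.le,
      Real.rpow_natCast, ← Real.sqrt_eq_rpow, he_def]
  rw [hE]
  clear_value e
  set D : ℝ := 2 * e ^ 3 + a ^ 2 * b + b ^ 2 * a with hD
  set N : ℝ := 2 * e ^ 3 - a ^ 2 * b - b ^ 2 * a with hN
  clear_value D N
  have hD0 : 0 < D := by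
    rw [hD]
    nlinarith [pow_pos he0 3, mul_pos (mul_pos ha ha) hb, mul_pos (mul_pos hb hb) ha]
  have haee : a ^ 2 < e ^ 2 := by rw [he2, hs]; nlinarith
  have hae : a < e := by nlinarith
  have heeb : e ^ 2 < b ^ 2 := by rw [he2, hs]; nlinarith
  have heb : e < b := by nlinarith
  have hN0 : 0 < N := by
    have hkey : a * (a ^ 2 + a * b + b ^ 2) = 3 * a * e ^ 2 := by rw [← hs, hs3e]; ring
    have h1 : 0 < (e - a) ^ 2 * (2 * e + a) :=
      mul_pos (pow_pos (sub_pos.mpr hae) 2) (by linarith)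
    rw [hN]; nlinarith [h1, hkey]
  -- the lower and upper bounds for s*x - x^3 on [a,b]
  have hlow : ∀ x : ℝ, a ≤ x → x ≤ b → a ^ 2 * b + b ^ 2 * a ≤ s * x - x ^ 3 := by
    intro x h1 h2
    have h3 : 0 ≤ (x - a) * (b - x) * (x + a + b) := by
      apply mul_nonneg (mul_nonneg (by linarith) (by linarith)) (by linarith)
    have hkey : s * x = (a ^ 2 + a * b + b ^ 2) * x := by rw [hs]
    nlinarith [h3, hkey]
  have hhigh : ∀ x : ℝ, a ≤ x → s * x - x ^ 3 ≤ 2 * e ^ 3 := by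
    intro x h1
    have h3 : 0 ≤ (x - e) ^ 2 * (x + 2 * e) := mul_nonneg (sq_nonneg _) (by linarith)
    have hkey : s * x = 3 * e ^ 2 * x := by rw [hs3e]
    nlinarith [h3, hkey]
  -- the explicit best polynomial
  set β : ℕ → ℝ := fun i => if i = 0 then 2 * s / D else -(2 / D) with hβ
  have hqβ : ∀ x : ℝ, oddPoly 2 β x = (2 * (s * x - x ^ 3)) / D := by
    intro x
    simp [oddPoly, Finset.sum_range_succ, hβ]
    ring
  clear_value β
  have hqα : ∀ x : ℝ, oddPoly 2 α x = α 0 * x + α 1 * x ^ 3 := by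
    intro x
    norm_num [oddPoly, Finset.sum_range_succ]
  have hperr : unifErr a b (fun _ => (1:ℝ)) (oddPoly 2 β) = N / D := by
    apply IsGreatest.csSup_eq
    constructor
    · refine ⟨a, ⟨le_rfl, hab.le⟩, ?_⟩
      have hsa : s * a - a ^ 3 = a ^ 2 * b + b ^ 2 * a := by rw [hs]; ring
      have h1 : (1:ℝ) - oddPoly 2 β a = N / D := by
        rw [hqβ, hsa]
        rw [eq_div_iff hD0.ne', sub_mul, div_mul_cancel₀ _ hD0.ne', hN, hD]
        ring
      show |(1:ℝ) - oddPoly 2 β a| = N / D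
      rw [h1]
      exact abs_of_nonneg (div_nonneg hN0.le hD0.le)
    · rintro y ⟨x, hx, rfl⟩
      have h1 := hlow x hx.1 hx.2
      have h2 := hhigh x hx.1
      have hPxD : oddPoly 2 β x * D = 2 * (s * x - x ^ 3) := by
        rw [hqβ]; field_simp
      have key1 : oddPoly 2 β x ≤ (D + N) / D := by
        rw [le_div_iff₀ hD0]
        linarith [hPxD, h2, hD, hN]
      have key2 : (D - N) / D ≤ oddPoly 2 β x := by
        rw [div_le_iff₀ hD0]
        linarith [hPxD, h1, hD, hN]
      have hDD : (D + N) / D = 1 + N / D := by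
        rw [add_div, div_self hD0.ne']
      have hDN : (D - N) / D = 1 - N / D := by
        rw [sub_div, div_self hD0.ne']
      show |(1:ℝ) - oddPoly 2 β x| ≤ N / D
      rw [abs_le]
      constructor
      · linarith [key1, hDD]
      · linarith [key2, hDN]
  have hbb := hbest β
  rw [hperr] at hbb
  unfold unifErr at hbb
  have hcont : ContinuousOn (fun x : ℝ => |(fun _ => (1:ℝ)) x - oddPoly 2 α x|) (Set.Icc a b) := by
    apply Continuous.continuousOn
    apply Continuous.abs
    apply Continuous.sub continuous_const
    unfold oddPoly
    fun_prop
  have hbdd : BddAbove ((fun x => |(fun _ => (1:ℝ)) x - oddPoly 2 α x|) '' Set.Icc a b) :=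
    (isCompact_Icc.image_of_continuousOn hcont).bddAbove
  have hub : ∀ x ∈ Set.Icc a b, |1 - oddPoly 2 α x| ≤ N / D := by
    intro x hx
    have hmem : |(1:ℝ) - oddPoly 2 α x|
        ∈ (fun x => |(fun _ => (1:ℝ)) x - oddPoly 2 α x|) '' Set.Icc a b := ⟨x, hx, rfl⟩
    exact le_trans (le_csSup hbdd hmem) hbb
  have hsa : s * a - a ^ 3 = a ^ 2 * b + b ^ 2 * a := by rw [hs]; ring
  have hsb : s * b - b ^ 3 = a ^ 2 * b + b ^ 2 * a := by rw [hs]; ring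
  have hse : s * e - e ^ 3 = 2 * e ^ 3 := by rw [hs3e]; ring
  have hA : 2 * (s * a - a ^ 3) ≤ (α 0 * a + α 1 * a ^ 3) * D := by
    have h := (abs_le.mp (hub a ⟨le_rfl, hab.le⟩)).2
    rw [hqα] at h
    have h2 : (D - N) / D ≤ α 0 * a + α 1 * a ^ 3 := by
      rw [sub_div, div_self hD0.ne']; linarith
    have h3 := (div_le_iff₀ hD0).mp h2
    rw [hsa]; linarith [h3, hD, hN]
  have hB : 2 * (s * b - b ^ 3) ≤ (α 0 * b + α 1 * b ^ 3) * D := by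
    have h := (abs_le.mp (hub b ⟨hab.le, le_rfl⟩)).2
    rw [hqα] at h
    have h2 : (D - N) / D ≤ α 0 * b + α 1 * b ^ 3 := by
      rw [sub_div, div_self hD0.ne']; linarith
    have h3 := (div_le_iff₀ hD0).mp h2
    rw [hsb]; linarith [h3, hD, hN]
  have hC : (α 0 * e + α 1 * e ^ 3) * D ≤ 4 * e ^ 3 := by
    have h := (abs_le.mp (hub e ⟨hae.le, heb.le⟩)).1
    rw [hqα] at h
    have h2 : α 0 * e + α 1 * e ^ 3 ≤ (D + N) / D := by
      rw [add_div, div_self hD0.ne']; linarith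
    have h3 := (le_div_iff₀ hD0).mp h2
    linarith [h3, hD, hN]
  have hA' : 0 ≤ (α 0 * D - 2 * s) + (α 1 * D + 2) * a ^ 2 := by
    have h : a * 0 ≤ a * ((α 0 * D - 2 * s) + (α 1 * D + 2) * a ^ 2) := by nlinarith [hA]
    exact le_of_mul_le_mul_left h ha
  have hB' : 0 ≤ (α 0 * D - 2 * s) + (α 1 * D + 2) * b ^ 2 := by
    have h : b * 0 ≤ b * ((α 0 * D - 2 * s) + (α 1 * D + 2) * b ^ 2) := by nlinarith [hB]
    exact le_of_mul_le_mul_left h hb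
  have hC' : (α 0 * D - 2 * s) + (α 1 * D + 2) * e ^ 2 ≤ 0 := by
    have h : e * ((α 0 * D - 2 * s) + (α 1 * D + 2) * e ^ 2) ≤ e * 0 := by nlinarith [hC, hse]
    exact le_of_mul_le_mul_left h he0
  have hδ1 : α 1 * D + 2 = 0 := by
    have l1 : α 1 * D + 2 ≤ 0 := by nlinarith [hA', hC', haee]
    have l2 : 0 ≤ α 1 * D + 2 := by nlinarith [hB', hC', heeb]
    linarith
  have hδ0 : α 0 * D - 2 * s = 0 := by
    have l1 : α 0 * D - 2 * s ≤ 0 := by nlinarith [hC', hδ1]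
    have l2 : 0 ≤ α 0 * D - 2 * s := by nlinarith [hA', hδ1]
    linarith
  have hα1 : α 1 = -(2 / D) := by
    field_simp
    linarith
  have hα0 : α 0 = 2 * s / D := by
    field_simp
    linarith
  have hfun : oddPoly 2 α = oddPoly 2 β := by
    funext x
    rw [hqα, hqβ, hα0, hα1]
    field_simp
    ring
  refine ⟨?_, ⟨hae.le, heb.le⟩, ?_, ?_⟩
  · intro x
    rw [hqα, hα0, hα1]
    field_simp
    ring
  · rw [isMaxOn_iff]
    intro x hx
    rw [hqα, hqα, hα0, hα1]
    rw [show 2 * s / D * e + -(2 / D) * e ^ 3 = 2 / D * (s * e - e ^ 3) by ring, hse,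
        show 2 * s / D * x + -(2 / D) * x ^ 3 = 2 / D * (s * x - x ^ 3) by ring]
    exact mul_le_mul_of_nonneg_left (hhigh x hx.1) (by positivity)
  · rw [hfun]
    exact hperr
end

section
/- Let 0 < a < b and define the recursion a₀ = a, b₀ = b, a_{n+1} = 1 − ε(2, a_n, b_n), b_{n+1} = 1 + ε(2, a_n, b_n), with errors ε_{n+1} = ε(2, a_n, b_n). Then the errors converge to zero quadratically: ε_{n+1} ≤ ε_n² for all n ≥ 1, and lim_{n→∞} ε_{n+1}/ε_n² = 3/4. -/
/-- `epsVal n a b = ε(n,a,b)`, the least possible uniform deviation of an element of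
`L_n` from the constant function `1` on `[a,b]`. -/
noncomputable def epsVal (n : ℕ) (a b : ℝ) : ℝ :=
  sInf (Set.range fun α : ℕ → ℝ => unifErr a b (fun _ => (1:ℝ)) (oddPoly n α))

lemma oddPoly_two (α : ℕ → ℝ) (x : ℝ) :
    oddPoly 2 α x = α 0 * x + α 1 * x ^ 3 := by
  simp [oddPoly, Finset.sum_range_succ]

lemma TS (a b m : ℝ) (ha : 0 < a) (hab : a < b) (hm : 0 < m)
    (hm2 : 3 * m^2 = a^2 + a*b + b^2) :
    a*b*(a+b) < 2*m^3 := by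
  have hb : 0 < b := ha.trans hab
  have h1 : (a+b)/2 < m := by nlinarith [sq_nonneg (a-b), sq_nonneg (m + (a+b)/2)]
  have h2 : a*b < m^2 := by nlinarith [sq_nonneg (a-b)]
  nlinarith [mul_pos ha hb, mul_pos (mul_pos ha hb) hm]

lemma a_lt_m (a b m : ℝ) (ha : 0 < a) (hab : a < b) (hm : 0 < m)
    (hm2 : 3 * m^2 = a^2 + a*b + b^2) : a < m ∧ m < b := by
  have hb : 0 < b := ha.trans hab
  constructor
  · nlinarith
  · nlinarith

set_option maxHeartbeats 1000000 in
lemma epsVal_two_eq' (a b m ε : ℝ) (ha : 0 < a) (hab : a < b) (hm : 0 < m)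
    (hm2 : 3 * m^2 = a^2 + a*b + b^2)
    (hε : ε * (2*m^3 + a*b*(a+b)) = 2*m^3 - a*b*(a+b)) :
    epsVal 2 a b = ε := by
  have hb : 0 < b := ha.trans hab
  obtain ⟨ham, hmb⟩ := a_lt_m a b m ha hab hm hm2
  have hSpos : 0 < a*b*(a+b) := by positivity
  have hTS : a*b*(a+b) < 2*m^3 := TS a b m ha hab hm hm2
  have hεpos : 0 < ε := by
    have h2 : 0 < 2*m^3 + a*b*(a+b) := by linarith
    nlinarith
  have hεlt : ε < 1 := by
    have h2 : 0 < 2*m^3 + a*b*(a+b) := by linarith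
    nlinarith
  obtain ⟨d, hd⟩ : ∃ d : ℝ, d * (a*b*(a+b)) = -(1-ε) :=
    ⟨-(1-ε)/(a*b*(a+b)), div_mul_cancel₀ _ (ne_of_gt hSpos)⟩
  have hdneg : d < 0 := by nlinarith
  obtain ⟨c, hc⟩ : ∃ c : ℝ, c + 3*d*m^2 = 0 := ⟨-(3*d*m^2), by ring⟩
  -- values at the three equioscillation points
  have hpa : c*a + d*a^3 = 1 - ε := by linear_combination a * hc - d*a*hm2 - hd
  have hpb : c*b + d*b^3 = 1 - ε := by linear_combination b * hc - d*b*hm2 - hd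
  have hpm : c*m + d*m^3 = 1 + ε := by
    have h1 : (a*b*(a+b))*(1+ε) = (2*m^3)*(1-ε) := by linear_combination hε
    have h2 : (-2*d*m^3) * (a*b*(a+b)) = (1+ε) * (a*b*(a+b)) := by
      linear_combination (-2*m^3) * hd - h1
    have h3 : -2*d*m^3 = 1 + ε := mul_right_cancel₀ (ne_of_gt hSpos) h2
    linear_combination m * hc + h3
  -- the candidate polynomial stays within ε of 1 on [a,b]
  have hub : ∀ x ∈ Set.Icc a b, |1 - (c*x + d*x^3)| ≤ ε := by
    rintro x ⟨hax, hxb⟩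
    have hx2m : (0:ℝ) ≤ x + 2*m := by linarith
    rw [abs_le]
    constructor
    · have key : (1+ε) - (c*x + d*x^3) = (-d)*(x-m)^2*(x+2*m) := by
        linear_combination (m - x)*hc - hpm
      nlinarith [mul_nonneg (mul_nonneg (neg_nonneg.mpr hdneg.le) (sq_nonneg (x-m))) hx2m]
    · have key : (c*x + d*x^3) - (1-ε) = (-d)*(x-a)*(b-x)*(x+a+b) := by
        linear_combination (x-a)*hc - d*(x-a)*hm2 + hpa
      nlinarith [mul_nonneg (mul_nonneg (mul_nonneg (neg_nonneg.mpr hdneg.le)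
        (by linarith : (0:ℝ) ≤ x - a)) (by linarith : (0:ℝ) ≤ b - x))
        (by linarith : (0:ℝ) ≤ x + a + b)]
  have hcontq : ∀ γ : ℕ → ℝ, Continuous fun x : ℝ => |(1:ℝ) - oddPoly 2 γ x| := by
    intro γ
    have h1 : Continuous fun x : ℝ => oddPoly 2 γ x := by
      have heq : (fun x : ℝ => oddPoly 2 γ x) = fun x => γ 0 * x + γ 1 * x ^ 3 := by
        funext x; exact oddPoly_two γ x
      rw [heq]; continuity
    exact (continuous_const.sub h1).abs
  have hnn : ∀ γ : ℕ → ℝ, 0 ≤ unifErr a b (fun _ => (1:ℝ)) (oddPoly 2 γ) := by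
    intro γ
    apply Real.sSup_nonneg
    rintro y ⟨x, hx, rfl⟩; positivity
  have hbddB : BddBelow (Set.range fun γ : ℕ → ℝ =>
      unifErr a b (fun _ => (1:ℝ)) (oddPoly 2 γ)) :=
    ⟨0, by rintro y ⟨γ, rfl⟩; exact hnn γ⟩
  have hupper : epsVal 2 a b ≤ ε := by
    refine csInf_le_of_le hbddB
      (Set.mem_range_self (fun i => if i = 0 then c else if i = 1 then d else 0)) ?_
    apply Real.sSup_le _ hεpos.le
    rintro y ⟨x, hx, rfl⟩
    have hval : oddPoly 2 (fun i => if i = 0 then c else if i = 1 then d else 0) x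
        = c*x + d*x^3 := by rw [oddPoly_two]; norm_num
    simpa [hval] using hub x hx
  have hlower : ε ≤ epsVal 2 a b := by
    apply le_csInf (Set.range_nonempty _)
    rintro y ⟨γ, rfl⟩
    by_contra hlt
    push_neg at hlt
    have hbddA : BddAbove ((fun x => |(fun _ => (1:ℝ)) x - oddPoly 2 γ x|) '' Set.Icc a b) :=
      (isCompact_Icc.image (hcontq γ)).bddAbove
    have hmemb : ∀ t ∈ Set.Icc a b, |1 - oddPoly 2 γ t| < ε := by
      intro t ht
      calc |1 - oddPoly 2 γ t| ≤ unifErr a b (fun _ => (1:ℝ)) (oddPoly 2 γ) :=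
            le_csSup hbddA ⟨t, ht, rfl⟩
        _ < ε := hlt
    obtain ⟨e, he⟩ : ∃ e : ℝ, e = γ 0 - c := ⟨_, rfl⟩
    obtain ⟨f, hf⟩ : ∃ f : ℝ, f = γ 1 - d := ⟨_, rfl⟩
    have h1 : 0 < e*a + f*a^3 := by
      have h := hmemb a ⟨le_refl a, hab.le⟩
      rw [oddPoly_two, abs_lt] at h
      rw [he, hf]; linarith [hpa, h.2]
    have h3 : 0 < e*b + f*b^3 := by
      have h := hmemb b ⟨hab.le, le_refl b⟩
      rw [oddPoly_two, abs_lt] at h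
      rw [he, hf]; linarith [hpb, h.2]
    have h2 : e*m + f*m^3 < 0 := by
      have h := hmemb m ⟨ham.le, hmb.le⟩
      rw [oddPoly_two, abs_lt] at h
      rw [he, hf]; linarith [hpm, h.1]
    have v1 := mul_pos hm h1
    have v2 := mul_pos ha (neg_pos.mpr h2)
    have v3 := mul_pos hm h3
    have v4 := mul_pos hb (neg_pos.mpr h2)
    have u1 : 0 < f * ((a*m)*(a^2-m^2)) := by
      have idu : f*((a*m)*(a^2-m^2)) = m*(e*a+f*a^3) + a*(-(e*m+f*m^3)) := by ring
      linarith [v1, v2, idu.ge, idu.le]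
    have u2 : 0 < f * ((b*m)*(b^2-m^2)) := by
      have idu : f*((b*m)*(b^2-m^2)) = m*(e*b+f*b^3) + b*(-(e*m+f*m^3)) := by ring
      linarith [v3, v4, idu.ge, idu.le]
    have hC1 : (a*m)*(a^2-m^2) < 0 :=
      mul_neg_of_pos_of_neg (mul_pos ha hm) (by nlinarith)
    have hC2 : 0 < (b*m)*(b^2-m^2) :=
      mul_pos (mul_pos hb hm) (by nlinarith)
    have hfneg : f < 0 := by
      rcases mul_pos_iff.mp u1 with ⟨_, hpos⟩ | ⟨hfn, _⟩
      · linarith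
      · exact hfn
    have hfpos : 0 < f := by
      rcases mul_pos_iff.mp u2 with ⟨hfp, _⟩ | ⟨_, hneg⟩
      · exact hfp
      · linarith
    linarith
  exact le_antisymm hupper hlower

lemma epsVal_pos_lt_one (a b : ℝ) (ha : 0 < a) (hab : a < b) :
    0 < epsVal 2 a b ∧ epsVal 2 a b < 1 := by
  have hb : 0 < b := ha.trans hab
  set m : ℝ := Real.sqrt ((a^2+a*b+b^2)/3) with hmdef
  have hm : 0 < m := Real.sqrt_pos.mpr (by positivity)
  have hm2 : 3 * m^2 = a^2 + a*b + b^2 := by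
    rw [hmdef, Real.sq_sqrt (by positivity)]; ring
  have hSpos : 0 < a*b*(a+b) := by positivity
  have hTS : a*b*(a+b) < 2*m^3 := TS a b m ha hab hm hm2
  have hden : 0 < 2*m^3 + a*b*(a+b) := by linarith
  have heq : epsVal 2 a b = (2*m^3 - a*b*(a+b)) / (2*m^3 + a*b*(a+b)) := by
    apply epsVal_two_eq' a b m _ ha hab hm hm2
    field_simp
  rw [heq]
  constructor
  · apply div_pos (by linarith) hden
  · rw [div_lt_one hden]; linarith

lemma epsVal_step (ε : ℝ) (h0 : 0 < ε) (h1 : ε < 1) :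
    epsVal 2 (1-ε) (1+ε) =
      (Real.sqrt (1+ε^2/3)^3 - (1-ε^2)) / (Real.sqrt (1+ε^2/3)^3 + (1-ε^2)) := by
  set m : ℝ := Real.sqrt (1+ε^2/3) with hmdef
  have hm : 0 < m := Real.sqrt_pos.mpr (by positivity)
  have hmsq : m^2 = 1+ε^2/3 := Real.sq_sqrt (by positivity)
  have hm3 : 0 < m^3 := by positivity
  have hden : 0 < m^3 + (1-ε^2) := by nlinarith
  apply epsVal_two_eq' (1-ε) (1+ε) m _ (by linarith) (by linarith) hm
    (by linear_combination 3*hmsq)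
  have hab : (1-ε)*(1+ε)*((1-ε)+(1+ε)) = 2*(1-ε^2) := by ring
  rw [hab]
  field_simp

lemma step_le_sq (ε : ℝ) (h0 : 0 < ε) (h1 : ε < 1) :
    epsVal 2 (1-ε) (1+ε) ≤ ε^2 := by
  rw [epsVal_step ε h0 h1]
  set m : ℝ := Real.sqrt (1+ε^2/3) with hmdef
  have hm : 0 < m := Real.sqrt_pos.mpr (by positivity)
  have hmsq : m^2 = 1+ε^2/3 := Real.sq_sqrt (by positivity)
  have hm3 : 0 < m^3 := by positivity
  have hden : 0 < m^3 + (1-ε^2) := by nlinarith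
  rw [div_le_iff₀ hden]
  have h6 : (m^3)^2 = (1+ε^2/3)^3 := by rw [← hmsq]; ring
  have hε2 : (0:ℝ) ≤ 1 - ε^2 := by nlinarith
  have h6' : (m^3)^2 ≤ (1+ε^2)^2 := by
    nlinarith [h6, sq_nonneg ε, sq_nonneg (ε^2), mul_nonneg (sq_nonneg (ε^2)) hε2]
  have hm3le : m^3 ≤ 1 + ε^2 := by nlinarith [h6', hm3]
  nlinarith [mul_nonneg hε2 (by linarith : (0:ℝ) ≤ 1 + ε^2 - m^3)]

lemma step_pos (ε : ℝ) (h0 : 0 < ε) (h1 : ε < 1) :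
    0 < epsVal 2 (1-ε) (1+ε) :=
  (epsVal_pos_lt_one (1-ε) (1+ε) (by linarith) (by linarith)).1

noncomputable def Grat : ℝ → ℝ := fun ε =>
  ((1+ε^2/3+ε^4/27)/(Real.sqrt (1+ε^2/3)^3+1) + 1) / (Real.sqrt (1+ε^2/3)^3 + 1 - ε^2)

lemma Grat_zero : Grat 0 = 3/4 := by
  simp [Grat]
  norm_num

lemma Grat_continuousAt : ContinuousAt Grat 0 := by
  have c1 : Continuous (fun ε : ℝ => Real.sqrt (1+ε^2/3)^3) := by
    apply Continuous.pow
    exact Real.continuous_sqrt.comp (by continuity)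
  have h10 : Real.sqrt (1+(0:ℝ)^2/3)^3 + 1 ≠ 0 := by norm_num
  have h20 : Real.sqrt (1+(0:ℝ)^2/3)^3 + 1 - (0:ℝ)^2 ≠ 0 := by norm_num
  apply ContinuousAt.div
  · apply ContinuousAt.add
    · exact ContinuousAt.div (by fun_prop) ((c1.add continuous_const).continuousAt) h10
    · exact continuousAt_const
  · exact ((c1.add continuous_const).sub (by fun_prop)).continuousAt
  · exact h20

lemma step_ratio (ε : ℝ) (h0 : 0 < ε) (h1 : ε < 1) :
    epsVal 2 (1-ε) (1+ε) / ε^2 = Grat ε := by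
  rw [epsVal_step ε h0 h1, Grat]
  set m : ℝ := Real.sqrt (1+ε^2/3) with hmdef
  have hm : 0 < m := Real.sqrt_pos.mpr (by positivity)
  have hmsq : m^2 = 1+ε^2/3 := Real.sq_sqrt (by positivity)
  have hm3 : 0 < m^3 := by positivity
  have hm6 : (m^3)^2 = (1+ε^2/3)^3 := by rw [← hmsq]; ring
  have hmge1 : 1 ≤ m := by nlinarith [hmsq, sq_nonneg ε]
  have hd1 : m^3 + (1-ε^2) ≠ 0 := by nlinarith
  have hd2 : m^3 + 1 ≠ 0 := by nlinarith
  have hd3 : m^3 + 1 - ε^2 ≠ 0 := by nlinarith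
  have hε2 : (ε:ℝ)^2 ≠ 0 := by positivity
  field_simp
  ring_nf
  nlinarith [hm6]

/-- For the recursion `a₀ = a`, `b₀ = b`,
`a_{n+1} = 1 − ε(2,a_n,b_n)`, `b_{n+1} = 1 + ε(2,a_n,b_n)`, with errors
`ε_{n+1} = ε(2,a_n,b_n)`, the errors converge to zero quadratically:
`ε_{n+1} ≤ ε_n²` for all `n ≥ 1` and `ε_{n+1}/ε_n² → 3/4`. -/
theorem error_quadratic_convergence (a b : ℝ) (ha : 0 < a) (hab : a < b)
    (A B E : ℕ → ℝ) (hA0 : A 0 = a) (hB0 : B 0 = b)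
    (hA : ∀ n, A (n + 1) = 1 - epsVal 2 (A n) (B n))
    (hB : ∀ n, B (n + 1) = 1 + epsVal 2 (A n) (B n))
    (hE : ∀ n, E (n + 1) = epsVal 2 (A n) (B n)) :
    (∀ n : ℕ, 1 ≤ n → E (n + 1) ≤ (E n) ^ 2) ∧
    Filter.Tendsto (fun n => E (n + 1) / (E n) ^ 2) Filter.atTop (nhds (3 / 4)) := by
  have hval : ∀ n, 0 < A n ∧ A n < B n := by
    intro n
    induction n with
    | zero => exact ⟨hA0 ▸ ha, by rw [hA0, hB0]; exact hab⟩
    | succ k ih =>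
      obtain ⟨h1, h2⟩ := ih
      obtain ⟨hp, hl⟩ := epsVal_pos_lt_one (A k) (B k) h1 h2
      rw [hA k, hB k]
      exact ⟨by linarith, by linarith⟩
  have hEpos : ∀ n, 0 < E (n+1) ∧ E (n+1) < 1 := by
    intro n; rw [hE n]; exact epsVal_pos_lt_one _ _ (hval n).1 (hval n).2
  have hstep : ∀ k, E (k+2) = epsVal 2 (1 - E (k+1)) (1 + E (k+1)) := by
    intro k
    rw [hE (k+1), hA k, hB k, hE k]
  have part1 : ∀ n, 1 ≤ n → E (n+1) ≤ E n ^ 2 := by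
    intro n hn
    cases n with
    | zero => omega
    | succ k =>
      rw [hstep k]
      exact step_le_sq _ (hEpos k).1 (hEpos k).2
  have hE1pos : 0 < E 1 := (hEpos 0).1
  have hE1lt : E 1 < 1 := (hEpos 0).2
  have hgeo : ∀ n, 1 ≤ n → E n ≤ E 1 ^ n := by
    intro n
    induction n with
    | zero => omega
    | succ k ih =>
      intro _
      rcases Nat.eq_zero_or_pos k with rfl | hk
      · simpa using le_refl (E 1)
      · have h1 := part1 k hk
        have h2 := ih hk
        have hEk : 0 ≤ E k := by
          cases k with
          | zero => omega
          | succ j => exact (hEpos j).1.le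
        calc E (k+1) ≤ E k ^ 2 := h1
          _ ≤ (E 1 ^ k) ^ 2 := pow_le_pow_left₀ hEk h2 2
          _ = E 1 ^ (2*k) := by rw [← pow_mul]; ring_nf
          _ ≤ E 1 ^ (k+1) := pow_le_pow_of_le_one hE1pos.le hE1lt.le (by omega)
  have hEto0 : Filter.Tendsto E Filter.atTop (nhds 0) := by
    apply squeeze_zero'
    · filter_upwards [Filter.eventually_ge_atTop 1] with n hn
      cases n with
      | zero => omega
      | succ k => exact (hEpos k).1.le
    · filter_upwards [Filter.eventually_ge_atTop 1] with n hn
      exact hgeo n hn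
    · exact tendsto_pow_atTop_nhds_zero_of_lt_one hE1pos.le hE1lt
  have hcomp : Filter.Tendsto (fun n => Grat (E n)) Filter.atTop (nhds (3/4)) := by
    have h := Grat_continuousAt.tendsto.comp hEto0
    rw [Grat_zero] at h
    exact h
  refine ⟨part1, ?_⟩
  apply hcomp.congr'
  filter_upwards [Filter.eventually_ge_atTop 1] with n hn
  cases n with
  | zero => omega
  | succ k =>
    rw [hstep k]
    exact (step_ratio (E (k+1)) (hEpos k).1 (hEpos k).2).symm
end

section
/- Let 0 < a₀ < 1 and b₀ = 1, and define the recursion a_{n+1} = 1 − ε(2, a_n, b_n), b_{n+1} = 1 + ε(2, a_n, b_n), with errors ε_{n+1} = ε(2, a_n, b_n). Then ε_n ≤ (1 − a₀)^{2ⁿ} for all n ≥ 1; consequently, for any ε ∈ (0,1), if n ≥ ⌈log₂(ln ε / ln(1 − a₀))⌉ then ε_n ≤ ε. -/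
lemma unifErr_nonneg (a b : ℝ) (f g : ℝ → ℝ) : 0 ≤ unifErr a b f g :=
  Real.sSup_nonneg (by rintro x ⟨y, -, rfl⟩; positivity)

lemma epsVal_nonneg (n : ℕ) (a b : ℝ) : 0 ≤ epsVal n a b :=
  Real.sInf_nonneg (by rintro x ⟨α, rfl⟩; exact unifErr_nonneg _ _ _ _)

lemma epsVal_le (n : ℕ) (a b : ℝ) (α : ℕ → ℝ) :
    epsVal n a b ≤ unifErr a b (fun _ => (1:ℝ)) (oddPoly n α) :=
  csInf_le ⟨0, by rintro x ⟨β, rfl⟩; exact unifErr_nonneg _ _ _ _⟩ ⟨α, rfl⟩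

lemma key (e a b : ℝ) (he : 0 < e) (he1 : e ≤ 1) (ha : 1 - e ≤ a) (hb : b ≤ 1 + e) :
    epsVal 2 a b ≤ e ^ 2 := by
  set α : ℕ → ℝ := fun i => if i = 0 then (3 + e ^ 2) / 2 else -1/2 with hα
  refine (epsVal_le 2 a b α).trans ?_
  refine Real.sSup_le ?_ (by positivity)
  rintro y ⟨x, hx, rfl⟩
  have hx1 : 1 - e ≤ x := ha.trans hx.1
  have hx2 : x ≤ 1 + e := hx.2.trans hb
  have hq : oddPoly 2 α x = (3 + e ^ 2) / 2 * x + (-1/2) * x ^ 3 := by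
    simp [oddPoly, Finset.sum_range_succ, hα]
  have hlb : -(e ^ 2) ≤ (1:ℝ) - ((3 + e ^ 2) / 2 * x + (-1/2) * x ^ 3) := by
    nlinarith [mul_nonneg (sq_nonneg (x - 1)) (by linarith : (0:ℝ) ≤ x + 2),
      mul_nonneg (sq_nonneg e) (by linarith : (0:ℝ) ≤ 2 - x)]
  have hub : (1:ℝ) - ((3 + e ^ 2) / 2 * x + (-1/2) * x ^ 3) ≤ e ^ 2 := by
    nlinarith [mul_nonneg (mul_nonneg (by linarith : (0:ℝ) ≤ x - (1 - e))
      (by linarith : (0:ℝ) ≤ (1 + e) - x)) (by linarith : (0:ℝ) ≤ x + 2)]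
  have := abs_le.mpr ⟨hlb, hub⟩
  simpa [hq] using this

/-- For the recursion started at `a₀ ∈ (0,1)`, `b₀ = 1`, with
`a_{n+1} = 1 − ε(2,a_n,b_n)`, `b_{n+1} = 1 + ε(2,a_n,b_n)` and errors
`ε_{n+1} = ε(2,a_n,b_n)`, one has `ε_n ≤ (1 − a₀)^(2ⁿ)` for all `n ≥ 1`; consequently,
for any `ε ∈ (0,1)`, if `n ≥ ⌈log₂(ln ε / ln(1 − a₀))⌉` then `ε_n ≤ ε`. -/
theorem error_number_of_steps (a₀ : ℝ) (ha₀ : 0 < a₀) (ha₁ : a₀ < 1)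
    (A B E : ℕ → ℝ) (hA0 : A 0 = a₀) (hB0 : B 0 = 1)
    (hA : ∀ n, A (n + 1) = 1 - epsVal 2 (A n) (B n))
    (hB : ∀ n, B (n + 1) = 1 + epsVal 2 (A n) (B n))
    (hE : ∀ n, E (n + 1) = epsVal 2 (A n) (B n)) :
    (∀ n : ℕ, 1 ≤ n → E n ≤ (1 - a₀) ^ (2 ^ n)) ∧
    (∀ ε : ℝ, ε ∈ Set.Ioo (0:ℝ) 1 → ∀ n : ℕ, 1 ≤ n →
      (⌈Real.logb 2 (Real.log ε / Real.log (1 - a₀))⌉ ≤ (n : ℤ)) → E n ≤ ε) := by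
  set g : ℕ → ℝ := fun n => (1 - a₀) ^ (2 ^ n) with hg
  have hg0 : ∀ n, 0 < g n := fun n => by
    simp only [hg]; exact pow_pos (by linarith) _
  have hg1 : ∀ n, g n < 1 := fun n =>
    pow_lt_one₀ (by linarith) (by linarith) (by positivity : (0:ℕ) < 2 ^ n).ne'
  have hgsq : ∀ n, (g n) ^ 2 = g (n + 1) := by
    intro n; simp only [hg]; rw [← pow_mul, ← pow_succ]
  have inv : ∀ n, 1 - g n ≤ A n ∧ B n ≤ 1 + g n := by
    intro n
    induction n with
    | zero =>
      have hg00 : g 0 = 1 - a₀ := by simp [hg]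
      exact ⟨by rw [hA0, hg00]; linarith, by rw [hB0, hg00]; linarith⟩
    | succ n ih =>
      have hkey := key (g n) (A n) (B n) (hg0 n) (hg1 n).le ih.1 ih.2
      rw [hgsq n] at hkey
      have hnn := epsVal_nonneg 2 (A n) (B n)
      rw [hA, hB]
      exact ⟨by linarith, by linarith⟩
  have hEn : ∀ n : ℕ, 1 ≤ n → E n ≤ g n := by
    intro n hn
    obtain ⟨m, rfl⟩ : ∃ m, n = m + 1 := ⟨n - 1, by omega⟩
    rw [hE]
    have hkey := key (g m) (A m) (B m) (hg0 m) (hg1 m).le (inv m).1 (inv m).2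
    rwa [hgsq m] at hkey
  refine ⟨hEn, ?_⟩
  rintro ε ⟨hε0, hε1⟩ n hn hceil
  have hlogε : Real.log ε < 0 := Real.log_neg hε0 hε1
  have hloga : Real.log (1 - a₀) < 0 := Real.log_neg (by linarith) (by linarith)
  set L : ℝ := Real.log ε / Real.log (1 - a₀) with hLdef
  have hL : Real.logb 2 L ≤ (n : ℝ) := by exact_mod_cast Int.ceil_le.mp hceil
  have hLpos : 0 < L := div_pos_of_neg_of_neg hlogε hloga
  have hL2 : L ≤ (2:ℝ) ^ (n:ℝ) := by
    rwa [Real.logb_le_iff_le_rpow (by norm_num) hLpos] at hL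
  have hx : (0:ℝ) < 1 - a₀ := by linarith
  have hcast : ((2 ^ n : ℕ) : ℝ) = (2:ℝ) ^ (n:ℝ) := by
    rw [Real.rpow_natCast]; push_cast; ring
  have h1 : (1 - a₀ : ℝ) ^ (((2 ^ n : ℕ) : ℝ)) ≤ (1 - a₀) ^ L := by
    apply Real.rpow_le_rpow_of_exponent_ge hx (by linarith)
    rw [hcast]; exact hL2
  have h2 : (1 - a₀ : ℝ) ^ L = ε := by
    rw [Real.rpow_def_of_pos hx, hLdef, mul_comm,
      div_mul_cancel₀ _ (ne_of_lt hloga), Real.exp_log hε0]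
  have hpow : (1 - a₀) ^ (2 ^ n) ≤ ε := by
    calc (1 - a₀) ^ (2 ^ n) = (1 - a₀ : ℝ) ^ (((2 ^ n : ℕ) : ℝ)) :=
          (Real.rpow_natCast _ _).symm
      _ ≤ (1 - a₀) ^ L := h1
      _ = ε := h2
  exact (hEn n hn).trans hpow
end

section
/- Let 0 < a < b with a + b = 2. Then ε(2, a, b) < (b − a)/2, and consequently for the recursion a' = 1 − ε(2,a,b), b' = 1 + ε(2,a,b) one has a' > a, b' < b, and a' + b' = 2. -/
/-- If `0 < a < b` and `a + b = 2`, then `ε(2,a,b) < (b − a)/2`; hence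
for `a' = 1 − ε(2,a,b)`, `b' = 1 + ε(2,a,b)` one has `a' > a`, `b' < b`, `a' + b' = 2`. -/
theorem eps_lt_half_length (a b : ℝ) (ha : 0 < a) (hab : a < b) (hsum : a + b = 2) :
    epsVal 2 a b < (b - a) / 2 ∧
    a < 1 - epsVal 2 a b ∧ 1 + epsVal 2 a b < b ∧
    (1 - epsVal 2 a b) + (1 + epsVal 2 a b) = 2 := by
  obtain ⟨d, hav, hbv⟩ : ∃ d : ℝ, a = 1 - d ∧ b = 1 + d :=
    ⟨(b - a) / 2, by linarith, by linarith⟩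
  have hd_def : (b - a) / 2 = d := by linarith
  have hd0 : 0 < d := by linarith
  have hd1 : d < 1 := by linarith
  obtain ⟨m, hm_def⟩ : ∃ m : ℝ, m = 1 + d / 4 := ⟨_, rfl⟩
  have hm0 : 0 < m := by rw [hm_def]; linarith
  have hm3 : 0 < 2 * m ^ 3 := by positivity
  -- the approximating odd polynomial: q(x) = (3 m² x − x³)/(2 m³)
  set α : ℕ → ℝ := fun i => if i = 0 then 3 / (2 * m) else if i = 1 then -1 / (2 * m ^ 3) else 0
    with hα_def
  have hq : ∀ x : ℝ, oddPoly 2 α x = (3 * m ^ 2 * x - x ^ 3) / (2 * m ^ 3) := by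
    intro x
    simp only [oddPoly, hα_def, Finset.sum_range_succ, Finset.sum_range_zero]
    norm_num
    field_simp
    ring
  -- u(x) = x³ − 3m²x + 2m³ = (x−m)²(x+2m), so 1 − q(x) = u(x)/(2m³)
  set u : ℝ → ℝ := fun x => x ^ 3 - 3 * m ^ 2 * x + 2 * m ^ 3 with hu_def
  set M : ℝ := max (u a) (u b) with hM_def
  have hua : 0 ≤ u a := by
    have h1 : u a = (a - m) ^ 2 * (a + 2 * m) := by simp only [hu_def]; ring
    rw [h1]; positivity
  have hM0 : 0 ≤ M := le_trans hua (le_max_left _ _)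
  set B : ℝ := M / (2 * m ^ 3) with hB_def
  have hB0 : 0 ≤ B := by positivity
  -- pointwise bound on the error
  have hpoint : ∀ x ∈ Set.Icc a b, |(1 : ℝ) - oddPoly 2 α x| ≤ B := by
    intro x hx
    obtain ⟨hxa, hxb⟩ := hx
    have hx0 : 0 < x := lt_of_lt_of_le ha hxa
    have herr : (1 : ℝ) - oddPoly 2 α x = u x / (2 * m ^ 3) := by
      rw [hq x]; simp only [hu_def]; field_simp; ring
    have hux0 : 0 ≤ u x := by
      have h1 : u x = (x - m) ^ 2 * (x + 2 * m) := by simp only [hu_def]; ring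
      rw [h1]; positivity
    -- chord (convexity) bound: u x ≤ max (u a) (u b)
    have hchord : (b - a) * u x ≤ (b - x) * u a + (x - a) * u b := by
      have hid : (b - x) * u a + (x - a) * u b - (b - a) * u x
          = (b - a) * ((x - a) * (b - x) * (x + a + b)) := by
        simp only [hu_def]; ring
      nlinarith [mul_nonneg (mul_nonneg (sub_nonneg.2 hxa) (sub_nonneg.2 hxb))
        (by linarith : (0:ℝ) ≤ x + a + b), sub_pos.2 hab]
    have huM : u x ≤ M := by
      have h1 : (b - x) * u a + (x - a) * u b ≤ (b - x) * M + (x - a) * M := by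
        have := mul_le_mul_of_nonneg_left (le_max_left (u a) (u b)) (sub_nonneg.2 hxb)
        have := mul_le_mul_of_nonneg_left (le_max_right (u a) (u b)) (sub_nonneg.2 hxa)
        simp only [← hM_def] at *
        linarith
      have h2 : (b - x) * M + (x - a) * M = (b - a) * M := by ring
      have h3 : (b - a) * u x ≤ (b - a) * M := by linarith
      exact le_of_mul_le_mul_left (by linarith) (sub_pos.2 hab)
    rw [herr, abs_of_nonneg (by positivity)]
    exact div_le_div_of_nonneg_right huM hm3.le |>.trans_eq rfl
  -- hence unifErr ≤ B
  have hunif : unifErr a b (fun _ => (1:ℝ)) (oddPoly 2 α) ≤ B := by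
    apply Real.sSup_le _ hB0
    rintro y ⟨x, hx, rfl⟩
    exact hpoint x hx
  -- endpoint estimates: B < d
  clear_value u M B
  have hBd : B < d := by
    rw [hB_def, div_lt_iff₀ hm3]
    have h1 : u a < d * (2 * m ^ 3) := by
      have hfac : d * (2 * m ^ 3) - u a = d * (1 - d) * (64 - 38 * d - d ^ 2) / 32 := by
        rw [hu_def, hav, hm_def]; ring
      nlinarith [mul_pos (mul_pos hd0 (by linarith : (0:ℝ) < 1 - d))
        (by nlinarith : (0:ℝ) < 64 - 38 * d - d ^ 2)]
    have h2 : u b < d * (2 * m ^ 3) := by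
      have hfac : d * (2 * m ^ 3) - u b = d * (64 - 6 * d - 15 * d ^ 2 + d ^ 3) / 32 := by
        rw [hu_def, hbv, hm_def]; ring
      nlinarith [mul_pos hd0 (by nlinarith : (0:ℝ) < 64 - 6 * d - 15 * d ^ 2 + d ^ 3)]
    rw [hM_def]; exact max_lt h1 h2
  -- epsVal ≤ unifErr via csInf_le
  have hbdd : BddBelow (Set.range fun α : ℕ → ℝ =>
      unifErr a b (fun _ => (1:ℝ)) (oddPoly 2 α)) := by
    refine ⟨0, ?_⟩
    rintro y ⟨β, rfl⟩
    apply Real.sSup_nonneg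
    rintro z ⟨x, _, rfl⟩
    exact abs_nonneg _
  have heps : epsVal 2 a b ≤ unifErr a b (fun _ => (1:ℝ)) (oddPoly 2 α) :=
    csInf_le hbdd ⟨α, rfl⟩
  have hmain : epsVal 2 a b < d := lt_of_le_of_lt (heps.trans hunif) hBd
  rw [hd_def]
  exact ⟨hmain, by linarith, by linarith, by ring⟩
end

section
/- Let δ ∈ (0,1). For a ∈ (0, 1+δ) with a ≠ 1+δ and y ∈ [1−δ, 1+δ], there is a unique odd polynomial r_{a,y} of degree at most 3 with r_{a,y}(a) = 1−δ and r_{a,y}(1+δ) = y. Moreover: (1) for fixed a, if y₁ ≤ y₂ then r'_{a,y₁}(0) ≥ r'_{a,y₂}(0); and (2) if a₁ ≤ a₂ (both in (0,1+δ)) then r'_{a₁,1−δ}(0) ≥ r'_{a₂,1−δ}(0). -/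
/-!
Writing the interpolant as `c₁ x + c₃ x³`, the two interpolation conditions form a linear system
in `(c₁, c₃)` with determinant `a b (b² - a²)`, where `b = 1 + δ`; for `0 < a < b` it is
positive, so Cramer's rule gives existence, uniqueness and
`r'(0) = c₁ = (u b³ - v a³) / (a b (b² - a²))`.
This is visibly antitone in the value `v` at `b`. When both values equal `u`, it simplifies to
`u (1 / b + b / (a (a + b)))`, which is antitone in `a` as soon as `u = 1 - δ ≥ 0`.
-/

theorem deriv_odd_cubic_zero (c₁ c₃ : ℝ) : deriv (fun x : ℝ => c₁ * x + c₃ * x ^ 3) 0 = c₁ := by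
  rw [deriv_fun_add (by fun_prop) (by fun_prop)]
  simp

section Field

variable {K : Type*} [Field K]

theorem odd_cubic_coeffs_eq {a b u v c₁ c₃ : K} (hD : a * b * (b ^ 2 - a ^ 2) ≠ 0)
    (ha : c₁ * a + c₃ * a ^ 3 = u) (hb : c₁ * b + c₃ * b ^ 3 = v) :
    c₁ = (u * b ^ 3 - v * a ^ 3) / (a * b * (b ^ 2 - a ^ 2)) ∧
      c₃ = (a * v - b * u) / (a * b * (b ^ 2 - a ^ 2)) := by
  constructor <;> rw [eq_div_iff hD]
  · linear_combination b ^ 3 * ha - a ^ 3 * hb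
  · linear_combination a * hb - b * ha

theorem existsUnique_odd_cubic_interpolating {a b : K} (hD : a * b * (b ^ 2 - a ^ 2) ≠ 0)
    (u v : K) :
    ∃! r : K → K, (∃ c₁ c₃ : K, r = fun x => c₁ * x + c₃ * x ^ 3) ∧ r a = u ∧ r b = v := by
  refine ⟨fun x => (u * b ^ 3 - v * a ^ 3) / (a * b * (b ^ 2 - a ^ 2)) * x +
      (a * v - b * u) / (a * b * (b ^ 2 - a ^ 2)) * x ^ 3, ⟨⟨_, _, rfl⟩, ?_⟩, ?_⟩
  · constructor <;>
    · dsimp only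
      rw [div_mul_eq_mul_div, div_mul_eq_mul_div, ← add_div, div_eq_iff hD]
      ring
  rintro r ⟨⟨c₁, c₃, rfl⟩, hra, hrb⟩
  obtain ⟨rfl, rfl⟩ := odd_cubic_coeffs_eq hD hra hrb
  rfl

end Field

section OrderedField

variable {K : Type*} [Field K] [LinearOrder K] [IsStrictOrderedRing K]

theorem odd_cubic_det_pos {a b : K} (ha : 0 < a) (hab : a < b) :
    0 < a * b * (b ^ 2 - a ^ 2) := by
  have hb : 0 < b := ha.trans hab
  have : 0 < b ^ 2 - a ^ 2 := sub_pos.2 (by gcongr)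
  positivity

theorem odd_cubic_linear_coeff_anti_of_value_le {a b u v₁ v₂ c₁ c₃ d₁ d₃ : K} (ha : 0 < a)
    (hab : a < b) (hv : v₁ ≤ v₂)
    (hca : c₁ * a + c₃ * a ^ 3 = u) (hcb : c₁ * b + c₃ * b ^ 3 = v₁)
    (hda : d₁ * a + d₃ * a ^ 3 = u) (hdb : d₁ * b + d₃ * b ^ 3 = v₂) : d₁ ≤ c₁ := by
  have hD := odd_cubic_det_pos ha hab
  rw [(odd_cubic_coeffs_eq hD.ne' hca hcb).1, (odd_cubic_coeffs_eq hD.ne' hda hdb).1]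
  gcongr

theorem odd_cubic_linear_coeff_of_eq_eq {a b u c₁ c₃ : K} (ha : 0 < a) (hab : a < b)
    (hca : c₁ * a + c₃ * a ^ 3 = u) (hcb : c₁ * b + c₃ * b ^ 3 = u) :
    c₁ = u * (b⁻¹ + b / (a * (a + b))) := by
  have hb : 0 < b := ha.trans hab
  have hba : b - a ≠ 0 := sub_ne_zero.2 hab.ne'
  have hsq : b ^ 2 - a ^ 2 = (b - a) * (a + b) := by ring
  rw [(odd_cubic_coeffs_eq (odd_cubic_det_pos ha hab).ne' hca hcb).1, hsq]
  field_simp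
  ring

theorem odd_cubic_linear_coeff_anti_of_node_le {a₁ a₂ b u c₁ c₃ d₁ d₃ : K} (ha₁ : 0 < a₁)
    (ha : a₁ ≤ a₂) (ha₂ : a₂ < b) (hu : 0 ≤ u)
    (hca : c₁ * a₁ + c₃ * a₁ ^ 3 = u) (hcb : c₁ * b + c₃ * b ^ 3 = u)
    (hda : d₁ * a₂ + d₃ * a₂ ^ 3 = u) (hdb : d₁ * b + d₃ * b ^ 3 = u) : d₁ ≤ c₁ := by
  have ha₂₀ : 0 < a₂ := ha₁.trans_le ha
  have hb : 0 < b := ha₂₀.trans ha₂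
  rw [odd_cubic_linear_coeff_of_eq_eq ha₁ (ha.trans_lt ha₂) hca hcb,
    odd_cubic_linear_coeff_of_eq_eq ha₂₀ ha₂ hda hdb]
  gcongr

end OrderedField

/-- Odd cubic interpolation `r_{a,y}` at `a` and `1+δ` (with values
`1−δ` and `y`) exists and is unique; moreover its derivative at the origin is
antitone in `y` (for fixed `a`) and, for `y = 1−δ`, antitone in `a`.
(The derivative at `0` of `x ↦ c₁x + c₃x³` is `c₁`.) -/
theorem cubic_interpolation_derivative_monotone (δ : ℝ) (hδ : δ ∈ Set.Ioo (0:ℝ) 1) :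
    (∀ a y : ℝ, a ∈ Set.Ioo (0:ℝ) (1 + δ) → a ≠ 1 + δ → y ∈ Set.Icc (1 - δ) (1 + δ) →
      ∃! r : ℝ → ℝ, (∃ c₁ c₃ : ℝ, r = fun x => c₁ * x + c₃ * x ^ 3) ∧
        r a = 1 - δ ∧ r (1 + δ) = y) ∧
    (∀ a y₁ y₂ c₁ c₃ d₁ d₃ : ℝ, a ∈ Set.Ioo (0:ℝ) (1 + δ) →
      y₁ ∈ Set.Icc (1 - δ) (1 + δ) → y₂ ∈ Set.Icc (1 - δ) (1 + δ) → y₁ ≤ y₂ →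
      c₁ * a + c₃ * a ^ 3 = 1 - δ → c₁ * (1 + δ) + c₃ * (1 + δ) ^ 3 = y₁ →
      d₁ * a + d₃ * a ^ 3 = 1 - δ → d₁ * (1 + δ) + d₃ * (1 + δ) ^ 3 = y₂ →
      deriv (fun x => d₁ * x + d₃ * x ^ 3) 0 ≤ deriv (fun x => c₁ * x + c₃ * x ^ 3) 0) ∧
    (∀ a₁ a₂ c₁ c₃ d₁ d₃ : ℝ, a₁ ∈ Set.Ioo (0:ℝ) (1 + δ) → a₂ ∈ Set.Ioo (0:ℝ) (1 + δ) →
      a₁ ≤ a₂ →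
      c₁ * a₁ + c₃ * a₁ ^ 3 = 1 - δ → c₁ * (1 + δ) + c₃ * (1 + δ) ^ 3 = 1 - δ →
      d₁ * a₂ + d₃ * a₂ ^ 3 = 1 - δ → d₁ * (1 + δ) + d₃ * (1 + δ) ^ 3 = 1 - δ →
      deriv (fun x => d₁ * x + d₃ * x ^ 3) 0 ≤ deriv (fun x => c₁ * x + c₃ * x ^ 3) 0) := by
  simp only [deriv_odd_cubic_zero]
  refine ⟨?_, ?_, ?_⟩
  · rintro a y ⟨ha₀, ha⟩ - -
    exact existsUnique_odd_cubic_interpolating (odd_cubic_det_pos ha₀ ha).ne' _ _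
  · rintro a y₁ y₂ c₁ c₃ d₁ d₃ ⟨ha₀, ha⟩ - - hy hca hcb hda hdb
    exact odd_cubic_linear_coeff_anti_of_value_le ha₀ ha hy hca hcb hda hdb
  · rintro a₁ a₂ c₁ c₃ d₁ d₃ ⟨ha₁, -⟩ ⟨-, ha₂⟩ ha hca hcb hda hdb
    exact odd_cubic_linear_coeff_anti_of_node_le ha₁ ha ha₂ (sub_nonneg.2 hδ.2.le)
      hca hcb hda hdb
end

section
/- Let δ ∈ (0,1), let p ∈ P_{d,δ} with witness a ∈ (0, 1−δ), and suppose there exists c > 1 such that p(x) ≥ c·x for all x ∈ [0, a]. Then for every x ∈ (0, 1+δ], the sequence of iterates x₁ = p(x), x₂ = p(p(x)), … monotonically increases until it enters the interval [1−δ, 1+δ], and once an iterate lies in [1−δ, 1+δ] all subsequent iterates remain in [1−δ, 1+δ]; in particular there exists N such that p^{(m)}(x) ∈ [1−δ, 1+δ] for all m ≥ N. -/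
/-- If `p ∈ 𝒫_{d,δ}` with witness `a` and `p(x) ≥ c·x` on `[0,a]` for
some `c > 1`, then for every `x ∈ (0, 1+δ]` the iterates `x₁ = p(x), x₂ = p(p(x)), …`
increase monotonically while below `[1−δ, 1+δ]`, the interval `[1−δ, 1+δ]` is
forward-invariant for the iterates, and eventually all iterates lie in `[1−δ, 1+δ]`. -/
theorem iterates_enter_and_stay (δ : ℝ) (hδ : δ ∈ Set.Ioo (0:ℝ) 1) (d : ℕ) (hd : 1 ≤ d)
    (p : ℝ → ℝ) (α : ℕ → ℝ) (hpoly : p = oddPoly d α)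
    (a : ℝ) (ha : a ∈ Set.Ioo (0:ℝ) (1 - δ)) (hpa : p a = 1 - δ)
    (hmap₁ : ∀ x ∈ Set.Icc a (1 + δ), p x ∈ Set.Icc (1 - δ) (1 + δ))
    (hmap₂ : ∀ x ∈ Set.Icc (0:ℝ) a, p x ∈ Set.Icc (0:ℝ) (1 - δ))
    (c : ℝ) (hc : 1 < c) (hcx : ∀ x ∈ Set.Icc (0:ℝ) a, c * x ≤ p x)
    (x : ℝ) (hx : x ∈ Set.Ioc (0:ℝ) (1 + δ)) :
    (∀ m : ℕ, 1 ≤ m → p^[m] x < 1 - δ → p^[m] x < p^[m + 1] x) ∧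
    (∀ m : ℕ, p^[m] x ∈ Set.Icc (1 - δ) (1 + δ) → p^[m + 1] x ∈ Set.Icc (1 - δ) (1 + δ)) ∧
    (∃ N : ℕ, ∀ m : ℕ, N ≤ m → p^[m] x ∈ Set.Icc (1 - δ) (1 + δ)) := by
  obtain ⟨hδ0, hδ1⟩ := hδ
  obtain ⟨ha0, ha1⟩ := ha
  obtain ⟨hx0, hx1⟩ := hx
  have hδ1' : (0:ℝ) < 1 - δ := by linarith
  have hstep : ∀ y ∈ Set.Ioc (0:ℝ) (1+δ), p y ∈ Set.Ioc (0:ℝ) (1+δ) := by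
    rintro y ⟨hy0, hy1⟩
    by_cases h : y ≤ a
    · have h1 := hmap₂ y ⟨hy0.le, h⟩
      have h2 := hcx y ⟨hy0.le, h⟩
      exact ⟨by nlinarith, by linarith [h1.2]⟩
    · have h1 := hmap₁ y ⟨(not_le.1 h).le, hy1⟩
      exact ⟨by linarith [h1.1], h1.2⟩
  have hiter : ∀ m, p^[m] x ∈ Set.Ioc (0:ℝ) (1+δ) := by
    intro m
    induction m with
    | zero => exact ⟨hx0, hx1⟩
    | succ n ih => rw [Function.iterate_succ_apply']; exact hstep _ ih
  have hgrow : ∀ y ∈ Set.Ioc (0:ℝ) (1+δ), y < 1 - δ → y < p y := by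
    rintro y ⟨hy0, hy1⟩ hy
    by_cases h : y ≤ a
    · have := hcx y ⟨hy0.le, h⟩; nlinarith
    · have h1 := hmap₁ y ⟨(not_le.1 h).le, hy1⟩; linarith [h1.1]
  have hinv : ∀ m : ℕ, p^[m] x ∈ Set.Icc (1 - δ) (1 + δ) →
      p^[m + 1] x ∈ Set.Icc (1 - δ) (1 + δ) := by
    rintro m ⟨h1, h2⟩
    rw [Function.iterate_succ_apply']
    exact hmap₁ _ ⟨by linarith, h2⟩
  refine ⟨?_, hinv, ?_⟩
  · intro m _ hm
    rw [Function.iterate_succ_apply']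
    exact hgrow _ (hiter m) hm
  · have hmin : ∀ m, min (c ^ m * x) (1 - δ) ≤ p^[m] x := by
      intro m
      induction m with
      | zero => simpa using min_le_of_left_le (le_of_eq (one_mul x))
      | succ n ih =>
        obtain ⟨hy0, hy1⟩ := hiter n
        rw [Function.iterate_succ_apply']
        set y := p^[n] x with hy
        by_cases hbig : 1 - δ ≤ y
        · have := hmap₁ y ⟨by linarith, hy1⟩
          exact min_le_of_right_le this.1
        · push_neg at hbig
          have hcn : c ^ n * x ≤ y := by
            rcases min_le_iff.1 ih with h | h
            · exact h
            · linarith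
          by_cases h : y ≤ a
          · have h2 := hcx y ⟨hy0.le, h⟩
            refine min_le_of_left_le ?_
            have hcp : (0:ℝ) < c := by linarith
            calc c ^ (n+1) * x = c * (c ^ n * x) := by ring
              _ ≤ c * y := by nlinarith
              _ ≤ p y := h2
          · have h1 := hmap₁ y ⟨(not_le.1 h).le, hy1⟩
            exact min_le_of_right_le h1.1
    obtain ⟨N, hN⟩ := pow_unbounded_of_one_lt ((1-δ)/x) hc
    have hNx : 1 - δ ≤ c ^ N * x := by
      rw [div_lt_iff₀ hx0] at hN
      linarith
    have hbase : p^[N] x ∈ Set.Icc (1 - δ) (1 + δ) := by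
      refine ⟨le_trans (le_min hNx le_rfl) (hmin N), (hiter N).2⟩
    refine ⟨N, fun m hm => ?_⟩
    induction m, hm using Nat.le_induction with
    | base => exact hbase
    | succ n hn ih => exact hinv n ih
end

section
/- Let X ∈ ℝ^{n×p} with p ≤ n satisfy XᵀX = I, let W ∈ ℝ^{n×n} be skew-symmetric (Wᵀ = −W), and set A = X + WX. Then AᵀA = I + Xᵀ Wᵀ W X; consequently every singular value of A is at least 1, and the largest singular value satisfies σ₁(A) ≤ √(‖A‖_F² − (p−1)), where ‖·‖_F is the Frobenius norm. -/
/-!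
Skew-symmetry of `W` kills the cross terms of `(X + WX)ᵀ(X + WX)`, leaving `I + BᵀB` with
`B = WX`. Hence every eigenvalue of `AᵀA` is `1` plus an eigenvalue of the positive semidefinite
`BᵀB`, and `‖Av‖² = ‖v‖² + ‖Bv‖² ≤ (1 + ‖B‖_F²)‖v‖²` by Cauchy–Schwarz, where
`‖A‖_F² = tr(AᵀA) = p + ‖B‖_F²`.
-/

open Matrix

namespace Matrix

variable {k m n R : Type*} [Fintype k] [Fintype m] [Fintype n]

omit [Fintype n] in
theorem transpose_mul_self_add_skew_mul [CommRing R] [DecidableEq n]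
    {X : Matrix m n R} {W : Matrix m m R} (hX : Xᵀ * X = 1) (hW : Wᵀ = -W) :
    (X + W * X)ᵀ * (X + W * X) = 1 + Xᵀ * Wᵀ * W * X := by
  rw [transpose_add, transpose_mul, Matrix.add_mul, Matrix.mul_add, Matrix.mul_add, hX, hW]
  simp only [Matrix.neg_mul, Matrix.mul_neg, Matrix.mul_assoc]
  abel

theorem sum_sq_apply_eq_trace_transpose_mul_self [CommSemiring R] (M : Matrix m n R) :
    ∑ i, ∑ j, M i j ^ 2 = (Mᵀ * M).trace := by
  simp only [trace, diag, mul_apply, transpose_apply, sq]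
  exact Finset.sum_comm

theorem sum_sq_mulVec_eq_dotProduct_transpose_mul_self_mulVec [CommSemiring R]
    (M : Matrix m n R) (v : n → R) :
    ∑ i, (M *ᵥ v) i ^ 2 = v ⬝ᵥ (Mᵀ * M) *ᵥ v := by
  rw [← mulVec_mulVec, dotProduct_mulVec, vecMul_transpose]
  simp only [dotProduct, sq]

variable [CommRing R] [LinearOrder R] [IsStrictOrderedRing R]

theorem sum_sq_mulVec_le (M : Matrix m n R) (v : n → R) :
    ∑ i, (M *ᵥ v) i ^ 2 ≤ (∑ i, ∑ j, M i j ^ 2) * ∑ j, v j ^ 2 := by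
  rw [Finset.sum_mul]
  exact Finset.sum_le_sum fun i _ => Finset.sum_mul_sq_le_sq_mul_sq _ (M i) v

theorem sum_sq_mulVec_le_of_transpose_mul_self_eq_one_add [DecidableEq n]
    {M : Matrix m n R} {B : Matrix k n R} (h : Mᵀ * M = 1 + Bᵀ * B) (v : n → R) :
    ∑ i, (M *ᵥ v) i ^ 2 ≤ (∑ i, ∑ j, M i j ^ 2 - (Fintype.card n - 1)) * ∑ j, v j ^ 2 := by
  have hM : ∑ i, ∑ j, M i j ^ 2 = Fintype.card n + ∑ i, ∑ j, B i j ^ 2 := by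
    simp only [sum_sq_apply_eq_trace_transpose_mul_self, h, trace_add, trace_one]
  have hMv : ∑ i, (M *ᵥ v) i ^ 2 = ∑ j, v j ^ 2 + ∑ i, (B *ᵥ v) i ^ 2 := by
    rw [sum_sq_mulVec_eq_dotProduct_transpose_mul_self_mulVec, h, add_mulVec, one_mulVec,
      dotProduct_add, ← sum_sq_mulVec_eq_dotProduct_transpose_mul_self_mulVec]
    simp only [dotProduct, sq]
  rw [hMv, hM]
  linarith [sum_sq_mulVec_le B v]

end Matrix

open scoped ComplexOrder Pointwise in
theorem Matrix.IsHermitian.one_le_eigenvalues {𝕜 n : Type*} [RCLike 𝕜] [Fintype n] [DecidableEq n]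
    {H : Matrix n n 𝕜} (hH : H.IsHermitian) (hpos : (H - 1).PosSemidef) (i : n) :
    1 ≤ hH.eigenvalues i := by
  have hmem : hH.eigenvalues i ∈ spectrum ℝ H :=
    hH.spectrum_real_eq_range_eigenvalues ▸ Set.mem_range_self i
  have hspec : spectrum ℝ H = ({1} : Set ℝ) + Set.range hpos.1.eigenvalues := by
    rw [← hpos.1.spectrum_real_eq_range_eigenvalues, spectrum.singleton_add_eq, map_one,
      add_sub_cancel]
  rw [hspec] at hmem
  obtain ⟨_, rfl, _, ⟨j, rfl⟩, hj⟩ := hmem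
  linarith [hpos.eigenvalues_nonneg j, show 1 + hpos.1.eigenvalues j = hH.eigenvalues i from hj]

/-- Singular values of `A` are the square roots of the eigenvalues of `AᵀA`, and `σ₁(A) ≤ c` is
stated as the operator-norm bound `‖Av‖ ≤ c ‖v‖`. -/
theorem retraction_gram_and_singular_value_bounds_general (n p : ℕ)
    (X : Matrix (Fin n) (Fin p) ℝ) (W : Matrix (Fin n) (Fin n) ℝ)
    (hX : Xᵀ * X = 1) (hW : Wᵀ = -W)
    (A : Matrix (Fin n) (Fin p) ℝ) (hA : A = X + W * X) :
    Aᵀ * A = 1 + Xᵀ * Wᵀ * W * X ∧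
    (∀ (h : (Aᵀ * A).IsHermitian) (i : Fin p), 1 ≤ Real.sqrt (h.eigenvalues i)) ∧
    (∀ v : Fin p → ℝ,
      Real.sqrt (∑ i, (A.mulVec v i) ^ 2)
        ≤ Real.sqrt ((∑ i, ∑ j, (A i j) ^ 2) - ((p : ℝ) - 1))
            * Real.sqrt (∑ j, (v j) ^ 2)) := by
  subst hA
  have hgram := transpose_mul_self_add_skew_mul hX hW
  have hgram_WX : (X + W * X)ᵀ * (X + W * X) = 1 + (W * X)ᵀ * (W * X) := by
    simp only [hgram, transpose_mul, Matrix.mul_assoc]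
  refine ⟨hgram, fun h i => Real.one_le_sqrt.mpr (h.one_le_eigenvalues ?_ i), fun v => ?_⟩
  · rw [hgram_WX, add_sub_cancel_left, ← conjTranspose_eq_transpose_of_trivial]
    exact posSemidef_conjTranspose_mul_self _
  · calc _ ≤ Real.sqrt (((∑ i, ∑ j, (X + W * X) i j ^ 2) - ((p : ℝ) - 1)) * ∑ j, v j ^ 2) := by
          simpa using Real.sqrt_le_sqrt (sum_sq_mulVec_le_of_transpose_mul_self_eq_one_add hgram_WX v)
      _ = _ := Real.sqrt_mul' _ (by positivity)

/-- Let `X ∈ ℝ^{n×p}` (`p ≤ n`) with `XᵀX = I`, let `W ∈ ℝ^{n×n}` be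
skew-symmetric, and `A = X + WX`. Then `AᵀA = I + XᵀWᵀWX`; consequently every singular
value of `A` (square root of an eigenvalue of `AᵀA`) is at least `1`, and the largest
singular value satisfies `σ₁(A) ≤ √(‖A‖_F² − (p−1))`, expressed by the operator-norm
bound `√(Σᵢ (Av)ᵢ²) ≤ √(‖A‖_F² − (p−1)) · √(Σⱼ vⱼ²)` for every vector `v`. -/
theorem retraction_gram_and_singular_value_bounds (n p : ℕ) (hpn : p ≤ n)
    (X : Matrix (Fin n) (Fin p) ℝ) (W : Matrix (Fin n) (Fin n) ℝ)
    (hX : Xᵀ * X = 1) (hW : Wᵀ = -W)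
    (A : Matrix (Fin n) (Fin p) ℝ) (hA : A = X + W * X) :
    Aᵀ * A = 1 + Xᵀ * Wᵀ * W * X ∧
    (∀ (h : (Aᵀ * A).IsHermitian) (i : Fin p), 1 ≤ Real.sqrt (h.eigenvalues i)) ∧
    (∀ v : Fin p → ℝ,
      Real.sqrt (∑ i, (A.mulVec v i) ^ 2)
        ≤ Real.sqrt ((∑ i, ∑ j, (A i j) ^ 2) - ((p : ℝ) - 1))
            * Real.sqrt (∑ j, (v j) ^ 2)) :=
  retraction_gram_and_singular_value_bounds_general n p X W hX hW A hA
end
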